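/- arXiv:0803.4281 — 5 statements merged into one kernel-verified Lean document; each statement's English description precedes it below -/
import Mathlib

section
/- Let H and G be finitely generated groups, each with trivial abelianization (i.e. H₁(H,ℤ) = H₁(G,ℤ) = 0). Then for any C¹ action ρ of the product group H × G on the circle, either ρ(h,1) is the identity homeomorphism for every h ∈ H, or ρ(1,g) is the identity homeomorphism for every g ∈ G. -/
open MeasureTheory

/-- The group of self-homeomorphisms of the circle `S¹ = ℝ/ℤ`,
with `f * g = f ∘ g`. -/
noncomputable instance : Group (UnitAddCircle ≃ₜ UnitAddCircle) where
  mul f g := g.trans f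
  one := Homeomorph.refl _
  inv := Homeomorph.symm
  mul_assoc _ _ _ := Homeomorph.ext fun _ => rfl
  one_mul _ := Homeomorph.ext fun _ => rfl
  mul_one _ := Homeomorph.ext fun _ => rfl
  inv_mul_cancel a := Homeomorph.ext a.symm_apply_apply

/-- `F : ℝ → ℝ` is a `C¹` lift of the circle homeomorphism `f`: it is `C¹` with
nowhere-vanishing derivative, commutes with the deck transformation up to sign,
and descends to `f` on `ℝ/ℤ`. -/
def IsC1Lift (f : UnitAddCircle ≃ₜ UnitAddCircle) (F : ℝ → ℝ) : Prop :=
  ContDiff ℝ 1 F ∧ (∀ x : ℝ, deriv F x ≠ 0) ∧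
    ((∀ x : ℝ, F (x + 1) = F x + 1) ∨ (∀ x : ℝ, F (x + 1) = F x - 1)) ∧
    ∀ x : ℝ, f (x : UnitAddCircle) = ((F x : ℝ) : UnitAddCircle)

/-- A `C¹` action of a group `Γ` on the circle: a homomorphism into the
self-homeomorphisms of the circle all of whose values admit `C¹` lifts. -/
def IsC1Action {Γ : Type*} [Group Γ] (ρ : Γ →* (UnitAddCircle ≃ₜ UnitAddCircle)) : Prop :=
  ∀ γ : Γ, ∃ F : ℝ → ℝ, IsC1Lift (ρ γ) F

/-- `F : ℝ → ℝ` is an orientation-preserving `C¹` lift of the circle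
homeomorphism `f`: it is `C¹` with everywhere positive derivative,
satisfies `F (x+1) = F x + 1` and descends to `f` on `ℝ/ℤ`. -/
def IsOPC1Lift (f : UnitAddCircle ≃ₜ UnitAddCircle) (F : ℝ → ℝ) : Prop :=
  ContDiff ℝ 1 F ∧ (∀ x : ℝ, 0 < deriv F x) ∧
    (∀ x : ℝ, F (x + 1) = F x + 1) ∧
    ∀ x : ℝ, f (x : UnitAddCircle) = ((F x : ℝ) : UnitAddCircle)

/-- `F : ℝ → ℝ` is an orientation-preserving (topological) lift of the circle
homeomorphism `f`: continuous, strictly increasing, satisfies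
`F (x+1) = F x + 1`, and descends to `f` on `ℝ/ℤ`. -/
def IsOPLift (f : UnitAddCircle ≃ₜ UnitAddCircle) (F : ℝ → ℝ) : Prop :=
  Continuous F ∧ StrictMono F ∧
    (∀ x : ℝ, F (x + 1) = F x + 1) ∧
    ∀ x : ℝ, f (x : UnitAddCircle) = ((F x : ℝ) : UnitAddCircle)


/-!
Since `H` and `G` are perfect, the degree homomorphism to `ℤ` is trivial, so both factors act by
orientation-preserving homeomorphisms. If `H` has a finite orbit `O`, an element of `H` with a fixed
point permutes `O` preserving the cyclic order, hence fixes `O` pointwise. Otherwise `H` has a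
minimal set `Λ` lying in every nonempty closed `H`-invariant set (a gap of `Λ` whose images do not
shrink would produce a finite orbit). As `G` commutes with `H`, it preserves `Λ`, and an element of
`G` with a fixed point fixes `Λ` pointwise, its fixed-point set being closed and `H`-invariant.

So some factor `K` preserves a nonempty set `Λ` that every element of `K` with a fixed point fixes
pointwise. On the preimage of `Λ` in `ℝ` any lift of an element of `K` is then `≤ id` or `≥ id`;
applied to commutators this makes the translation number additive, so the rotation number is a
homomorphism `K → ℝ/ℤ`, trivial by perfectness. Every element of `K` therefore has a fixed point,
and `K` fixes `Λ` pointwise. Finally, Thurston's stability theorem: at a common fixed point of a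
finitely generated perfect group of `C¹` maps of `ℝ` all derivatives are `1`, and a nontrivial
germ there would yield, after normalising displacements, a nonzero homomorphism to `ℝ`.
-/

open Filter Topology Set Function

theorem MonoidHom.apply_eq_one_of_subsingleton_abelianization {Γ M : Type*} [Group Γ]
    [CommMonoid M] [Subsingleton (Abelianization Γ)] (φ : Γ →* M) (γ : Γ) : φ γ = 1 := by
  have h : Abelianization.lift φ.toHomUnits (Abelianization.of γ) = 1 := by
    rw [Subsingleton.elim (Abelianization.of γ) 1, map_one]
  simpa using congrArg Units.val h

theorem exists_mem_apply_ne_of_closure_eq_top {Γ α : Type*} [Group Γ] {T : Γ → α → α}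
    {S : Set Γ} (hS : Subgroup.closure S = ⊤) (hmul : ∀ γ δ, T (γ * δ) = T γ ∘ T δ)
    (hone : T 1 = id) {x : α} {γ : Γ} (hγ : T γ x ≠ x) : ∃ s ∈ S, T s x ≠ x := by
  by_contra! hfix
  suffices ∀ γ, T γ x = x from hγ (this γ)
  intro γ
  induction (hS ▸ Subgroup.mem_top γ : γ ∈ Subgroup.closure S) using Subgroup.closure_induction with
  | mem s hs => exact hfix s hs
  | one => rw [hone, id]
  | mul u v _ _ hu hv => rw [hmul, comp_apply, hv, hu]
  | inv u _ hu =>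
    calc T u⁻¹ x = T (u⁻¹ * u) x := by rw [hmul, comp_apply, hu]
      _ = x := by rw [inv_mul_cancel, hone, id]

section AlmostAdditive

variable {Γ ι : Type*} [Group Γ] {S : Finset Γ} {l : Filter ι} {φ : ι → Γ → ℝ}

theorem exists_eventually_abs_le_of_almost_additive (hS : Subgroup.closure (S : Set Γ) = ⊤)
    (hnorm : ∀ᶠ i in l, ∑ s ∈ S, |φ i s| = 1)
    (hmul : ∀ γ δ, ∀ ε > 0, ∀ᶠ i in l, |φ i (γ * δ) - φ i γ - φ i δ| ≤ ε * |φ i δ|) (γ : Γ) :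
    ∃ C, ∀ᶠ i in l, |φ i γ| ≤ C := by
  have hone : ∀ᶠ i in l, φ i 1 = 0 := by
    filter_upwards [hmul 1 1 (1 / 2) (by norm_num)] with i hi
    rw [mul_one, sub_sub_cancel_left, abs_neg] at hi
    exact abs_eq_zero.1 (by linarith [abs_nonneg (φ i 1)])
  induction (hS ▸ Subgroup.mem_top γ : γ ∈ Subgroup.closure (S : Set Γ))
    using Subgroup.closure_induction with
  | mem s hs =>
    refine ⟨1, hnorm.mono fun i hi => hi ▸ ?_⟩
    exact Finset.single_le_sum (f := fun s => |φ i s|) (fun _ _ => abs_nonneg _) hs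
  | one => exact ⟨0, hone.mono fun i hi => by simp [hi]⟩
  | mul u v _ _ hu hv =>
    obtain ⟨Cu, hCu⟩ := hu
    obtain ⟨Cv, hCv⟩ := hv
    refine ⟨Cu + 2 * Cv, ?_⟩
    filter_upwards [hmul u v 1 one_pos, hCu, hCv] with i h hu hv
    have := abs_sub_abs_le_abs_sub (φ i (u * v)) (φ i u + φ i v)
    rw [sub_add_eq_sub_sub] at this
    linarith [abs_add_le (φ i u) (φ i v)]
  | inv u _ hu =>
    obtain ⟨Cu, hCu⟩ := hu
    refine ⟨2 * Cu, ?_⟩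
    filter_upwards [hmul u⁻¹ u 1 one_pos, hCu, hone] with i h hu h1
    rw [inv_mul_cancel, h1, zero_sub, sub_eq_add_neg, ← neg_add, abs_neg] at h
    have := abs_add_le (φ i u⁻¹ + φ i u) (-φ i u)
    rw [add_neg_cancel_right, abs_neg] at this
    linarith

theorem exists_monoidHom_ne_one_of_almost_additive [l.NeBot]
    (hS : Subgroup.closure (S : Set Γ) = ⊤) (hnorm : ∀ᶠ i in l, ∑ s ∈ S, |φ i s| = 1)
    (hmul : ∀ γ δ, ∀ ε > 0, ∀ᶠ i in l, |φ i (γ * δ) - φ i γ - φ i δ| ≤ ε * |φ i δ|) :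
    ∃ Φ : Γ →* Multiplicative ℝ, Φ ≠ 1 := by
  set U := Ultrafilter.of l
  have hUl : (U : Filter ι) ≤ l := Ultrafilter.of_le l
  have hlim : ∀ γ, ∃ L, Tendsto (fun i => φ i γ) U (𝓝 L) := by
    intro γ
    obtain ⟨C, hC⟩ := exists_eventually_abs_le_of_almost_additive hS hnorm hmul γ
    obtain ⟨L, -, hL⟩ := (isCompact_Icc (a := -C) (b := C)).ultrafilter_le_nhds
      (U.map fun i => φ i γ) (le_principal_iff.2 (hUl (hC.mono fun i hi => abs_le.1 hi)))
    exact ⟨L, hL⟩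
  choose Φ hΦ using hlim
  have hΦmul : ∀ γ δ, Φ (γ * δ) = Φ γ + Φ δ := by
    intro γ δ
    have hsmall : ∀ ε > 0, |Φ (γ * δ) - Φ γ - Φ δ| ≤ ε * |Φ δ| := fun ε hε =>
      le_of_tendsto_of_tendsto (((hΦ _).sub (hΦ γ)).sub (hΦ δ)).abs
        ((hΦ δ).abs.const_mul ε) (hUl (hmul γ δ ε hε))
    have hlim : Tendsto (fun ε => ε * |Φ δ|) (𝓝[>] 0) (𝓝 0) :=
      ((continuous_mul_const _).tendsto' 0 0 (zero_mul _)).mono_left nhdsWithin_le_nhds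
    linarith [abs_nonpos_iff.1 (ge_of_tendsto hlim (eventually_mem_nhdsWithin.mono hsmall))]
  have hΦ1 : Φ 1 = 0 := by simpa using hΦmul 1 1
  refine ⟨{ toFun := fun γ => Multiplicative.ofAdd (Φ γ)
            map_one' := by rw [hΦ1]; rfl
            map_mul' := fun γ δ => by rw [hΦmul]; rfl }, fun h => ?_⟩
  have hnormU : ∀ᶠ i in (U : Filter ι), ∑ s ∈ S, |φ i s| = 1 := hUl hnorm
  have hsum : ∑ s ∈ S, |Φ s| = 1 :=
    tendsto_nhds_unique (tendsto_finsetSum S fun s _ => (hΦ s).abs)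
      (tendsto_const_nhds.congr' (hnormU.mono fun i hi => hi.symm))
  have hzero : ∀ γ, Φ γ = 0 := fun γ => congrArg Multiplicative.toAdd (DFunLike.congr_fun h γ)
  simp [hzero] at hsum

end AlmostAdditive

theorem ContDiff.eventually_abs_sub_sub_le_of_deriv_eq_one {F : ℝ → ℝ} (hF : ContDiff ℝ 1 F)
    {c : ℝ} (hc : deriv F c = 1) {ε : ℝ} (hε : 0 < ε) :
    ∀ᶠ p in 𝓝 (c, c), |F p.1 - p.1 - (F p.2 - p.2)| ≤ ε * |p.1 - p.2| := by
  have hs := (hF.contDiffAt : ContDiffAt ℝ 1 F c).hasStrictDerivAt one_ne_zero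
  rw [hc] at hs
  filter_upwards [hs.hasStrictFDerivAt.isLittleO.def hε] with p hp
  rw [Real.norm_eq_abs, Real.norm_eq_abs] at hp
  convert hp using 2
  simp only [ContinuousLinearMap.toSpanSingleton_apply, smul_eq_mul, mul_one]
  ring

theorem eq_of_forall_nat_mul_abs_sub_lt {a b C : ℝ} (h : ∀ n : ℕ, n * |a - b| < C) : a = b := by
  by_contra hab
  obtain ⟨n, hn⟩ := exists_nat_gt (C / |a - b|)
  have := h n
  rw [div_lt_iff₀ (abs_pos.2 (sub_ne_zero.2 hab))] at hn
  linarith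

section Iterate

variable {α : Type*} [Preorder α] {f g : α → α} {S : Set α}

theorem iterate_map_le_map_iterate_of_mapsTo (hf : Monotone f) (hfS : MapsTo f S S)
    (h : ∀ y ∈ S, f (g y) ≤ g (f y)) (n : ℕ) : ∀ y ∈ S, f^[n] (g y) ≤ g (f^[n] y) := by
  induction n with
  | zero => simp
  | succ n ih =>
    intro y hy
    rw [iterate_succ_apply, iterate_succ_apply]
    exact (hf.iterate n (h y hy)).trans (ih _ (hfS hy))

theorem iterate_iterate_le_iterate_comp_of_mapsTo (hf : Monotone f) (hg : Monotone g)
    (hfS : MapsTo f S S) (hgS : MapsTo g S S) (h : ∀ y ∈ S, f (g y) ≤ g (f y)) (n : ℕ) :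
    ∀ y ∈ S, f^[n] (g^[n] y) ≤ (f ∘ g)^[n] y := by
  induction n with
  | zero => simp
  | succ n ih =>
    intro y hy
    rw [iterate_succ_apply', iterate_succ_apply', iterate_succ_apply']
    exact hf ((iterate_map_le_map_iterate_of_mapsTo hf hfS h n _ (hgS.iterate n hy)).trans
      (hg (ih y hy)))

end Iterate

theorem StrictMono.eq_of_mapsTo_of_finite {α : Type*} [LinearOrder α] {A : α → α}
    (hA : StrictMono A) {W : Set α} (hW : W.Finite) (hmaps : MapsTo A W W) {y : α}
    (hy : y ∈ W) : A y = y := by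
  have := hW.to_subtype
  have hB : StrictMono (hmaps.restrict A W W) := fun _ _ h => hA h
  exact congrArg Subtype.val
    (le_antisymm hB.apply_le hB.le_apply : hmaps.restrict A W W ⟨y, hy⟩ = ⟨y, hy⟩)

theorem IsClosed.exists_Ioo_disjoint {α : Type*} [ConditionallyCompleteLinearOrder α]
    [TopologicalSpace α] [OrderTopology α] {S : Set α} (hS : IsClosed S) {x : α} (hx : x ∉ S)
    {a₀ b₀ : α} (ha₀ : a₀ ∈ S) (hb₀ : b₀ ∈ S) (hax : a₀ ≤ x) (hxb : x ≤ b₀) :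
    ∃ a ∈ S, ∃ b ∈ S, x ∈ Ioo a b ∧ Disjoint (Ioo a b) S := by
  have hbdd : BddAbove (S ∩ Iic x) := ⟨x, fun _ h => h.2⟩
  have hbdd' : BddBelow (S ∩ Ici x) := ⟨x, fun _ h => h.2⟩
  have ha := (hS.inter isClosed_Iic).csSup_mem ⟨a₀, ha₀, hax⟩ hbdd
  have hb := (hS.inter isClosed_Ici).csInf_mem ⟨b₀, hb₀, hxb⟩ hbdd'
  refine ⟨_, ha.1, _, hb.1, ⟨ha.2.lt_of_ne (ne_of_mem_of_not_mem ha.1 hx),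
    hb.2.lt_of_ne' (ne_of_mem_of_not_mem hb.1 hx)⟩, disjoint_left.2 fun w hw hwS => ?_⟩
  rcases le_total w x with h | h
  · exact (le_csSup hbdd ⟨hwS, h⟩).not_gt hw.1
  · exact (csInf_le hbdd' ⟨hwS, h⟩).not_gt hw.2

theorem Set.finite_of_subset_Ico_of_add_le {P : Set ℝ} {L : ℝ} (hP : P ⊆ Ico 0 L) {ε : ℝ}
    (hε : 0 < ε) (hsep : ∀ c ∈ P, ∀ c' ∈ P, c < c' → c + ε ≤ c') : P.Finite := by
  refine Finite.of_finite_image (f := fun c => ⌊c / ε⌋₊) ((finite_Iic ⌊L / ε⌋₊).subset ?_) ?_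
  · rintro _ ⟨c, hc, rfl⟩
    exact Nat.floor_le_floor (div_le_div_of_nonneg_right (hP hc).2.le hε.le)
  · intro c hc c' hc' h
    by_contra hne
    wlog hlt : c < c' generalizing c c'
    · exact this hc' hc h.symm (Ne.symm hne) ((Ne.symm hne).lt_of_le (not_lt.1 hlt))
    have hfloor : ⌊c / ε⌋₊ + 1 ≤ ⌊c' / ε⌋₊ := by
      rw [← Nat.floor_add_one (div_nonneg (hP hc).1 hε.le)]
      refine Nat.floor_le_floor ?_
      rw [div_add_one hε.ne', div_le_div_iff_of_pos_right hε]
      exact hsep c hc c' hc' hlt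
    simp only at h
    omega

theorem exists_minimal_isClosed_invariant {X ι : Type*} [TopologicalSpace X] [CompactSpace X]
    [Nonempty X] (T : ι → X → X) :
    ∃ Λ : Set X, IsClosed Λ ∧ Λ.Nonempty ∧ (∀ i, MapsTo (T i) Λ Λ) ∧
      ∀ Y ⊆ Λ, IsClosed Y → Y.Nonempty → (∀ i, MapsTo (T i) Y Y) → Λ ⊆ Y := by
  set 𝒞 := {Y : Set X | IsClosed Y ∧ Y.Nonempty ∧ ∀ i, MapsTo (T i) Y Y}
  have hchain : ∀ c ⊆ 𝒞, IsChain (· ⊆ ·) c → c.Nonempty → ∃ lb ∈ 𝒞, ∀ Y ∈ c, lb ⊆ Y := by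
    intro c hc hchain hne
    have := hne.to_subtype
    refine ⟨⋂₀ c, ⟨isClosed_sInter fun Y hY => (hc hY).1, ?_, fun i x hx =>
      mem_sInter.2 fun Y hY => (hc hY).2.2 i (mem_sInter.1 hx Y hY)⟩,
      fun _ => sInter_subset_of_mem⟩
    exact IsCompact.nonempty_sInter_of_directed_nonempty_isCompact_isClosed
      (fun Y hY Z hZ => (hchain.total hY hZ).elim (fun h => ⟨Y, hY, subset_rfl, h⟩)
        fun h => ⟨Z, hZ, h, subset_rfl⟩)
      (fun Y hY => (hc hY).2.1) (fun Y hY => (hc hY).1.isCompact) fun Y hY => (hc hY).1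
  obtain ⟨Λ, -, hΛ⟩ := zorn_superset_nonempty 𝒞 hchain univ
    ⟨isClosed_univ, univ_nonempty, fun _ => mapsTo_univ _ _⟩
  exact ⟨Λ, hΛ.prop.1, hΛ.prop.2.1, hΛ.prop.2.2, fun Y hYΛ hY hYne hYinv =>
    hΛ.2 ⟨hY, hYne, hYinv⟩ hYΛ⟩

namespace Thurston

variable {Γ : Type*} [Group Γ] {T : Γ → ℝ → ℝ}

theorem deriv_eq_one [Subsingleton (Abelianization Γ)] (hC : ∀ γ, ContDiff ℝ 1 (T γ))
    (hmul : ∀ γ δ, T (γ * δ) = T γ ∘ T δ) (hone : T 1 = id) {c : ℝ} (hc : ∀ γ, T γ c = c)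
    (γ : Γ) : deriv (T γ) c = 1 :=
  let φ : Γ →* ℝ :=
    { toFun := fun γ => deriv (T γ) c
      map_one' := by rw [hone, deriv_id]
      map_mul' := fun γ δ => by
        rw [hmul, deriv_comp c ((hC γ).differentiable one_ne_zero _)
          ((hC δ).differentiable one_ne_zero _), hc δ] }
  φ.apply_eq_one_of_subsingleton_abelianization γ

theorem exists_monoidHom_ne_one (hfg : Group.FG Γ) (hC : ∀ γ, ContDiff ℝ 1 (T γ))
    (hmul : ∀ γ δ, T (γ * δ) = T γ ∘ T δ) (hone : T 1 = id) {c : ℝ} (hc : ∀ γ, T γ c = c)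
    (hderiv : ∀ γ, deriv (T γ) c = 1) (hmoved : ∀ᶠ x in 𝓝[>] c, ∃ γ, T γ x ≠ x) :
    ∃ Φ : Γ →* Multiplicative ℝ, Φ ≠ 1 := by
  obtain ⟨S, hS⟩ := Group.fg_def.1 hfg
  set d : ℝ → ℝ := fun x => ∑ s ∈ S, |T s x - x|
  have hd : ∀ᶠ x in 𝓝[>] c, 0 < d x := hmoved.mono fun x ⟨γ, hγ⟩ => by
    obtain ⟨s, hs, hsx⟩ := exists_mem_apply_ne_of_closure_eq_top hS hmul hone hγ
    exact (abs_pos.2 (sub_ne_zero.2 hsx)).trans_le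
      (Finset.single_le_sum (f := fun s => |T s x - x|) (fun _ _ => abs_nonneg _) hs)
  -- every `T γ` has strict derivative `1` at `c`, so normalised displacements are almost additive
  refine exists_monoidHom_ne_one_of_almost_additive (l := 𝓝[>] c)
    (φ := fun x γ => (T γ x - x) / d x) hS ?_ fun γ δ ε hε => ?_
  · filter_upwards [hd] with x hx
    simp_rw [abs_div, abs_of_pos hx, ← Finset.sum_div]
    exact div_self hx.ne'
  · have hpair : Tendsto (fun x => (T δ x, x)) (𝓝[>] c) (𝓝 (c, c)) := by
      have := ((hC δ).continuous.prodMk continuous_id).tendsto c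
      rw [hc δ] at this
      exact this.mono_left nhdsWithin_le_nhds
    filter_upwards [hpair.eventually ((hC γ).eventually_abs_sub_sub_le_of_deriv_eq_one
      (hderiv γ) hε), hd] with x hx hdx
    rw [hmul, comp_apply, ← sub_div, ← sub_div, abs_div, abs_div, abs_of_pos hdx,
      ← mul_div_assoc, div_le_div_iff_of_pos_right hdx]
    rwa [show T γ (T δ x) - x - (T γ x - x) - (T δ x - x)
      = T γ (T δ x) - T δ x - (T γ x - x) by ring]

theorem apply_eq_self_of_le [Subsingleton (Abelianization Γ)] (hfg : Group.FG Γ)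
    (hC : ∀ γ, ContDiff ℝ 1 (T γ)) (hmul : ∀ γ δ, T (γ * δ) = T γ ∘ T δ) (hone : T 1 = id)
    {a : ℝ} (ha : ∀ γ, T γ a = a) {x : ℝ} (hax : a ≤ x) (γ : Γ) : T γ x = x := by
  by_contra hγx
  set Z := Icc a x ∩ ⋂ γ, {y | T γ y = y}
  have hZ : IsClosed Z :=
    isClosed_Icc.inter (isClosed_iInter fun γ => isClosed_eq (hC γ).continuous continuous_id)
  have hcZ : sSup Z ∈ Z :=
    hZ.csSup_mem ⟨a, ⟨le_rfl, hax⟩, mem_iInter.2 ha⟩ ⟨x, fun y hy => hy.1.2⟩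
  set c := sSup Z
  have hcfix : ∀ γ, T γ c = c := fun γ => mem_iInter.1 hcZ.2 γ
  have hcx : c < x := hcZ.1.2.lt_of_ne fun h => hγx (h ▸ hcfix γ)
  have hmoved : ∀ᶠ y in 𝓝[>] c, ∃ γ, T γ y ≠ y := by
    filter_upwards [Ioc_mem_nhdsGT hcx] with y hy
    by_contra! hfix
    have hyZ : y ∈ Z := ⟨⟨hcZ.1.1.trans hy.1.le, hy.2⟩, mem_iInter.2 hfix⟩
    exact (le_csSup ⟨x, fun z hz => hz.1.2⟩ hyZ).not_gt hy.1
  obtain ⟨Φ, hΦ⟩ := exists_monoidHom_ne_one hfg hC hmul hone hcfix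
    (deriv_eq_one hC hmul hone hcfix) hmoved
  exact hΦ (MonoidHom.ext Φ.apply_eq_one_of_subsingleton_abelianization)

end Thurston

namespace UnitAddCircle

theorem coe_surjective : Surjective ((↑) : ℝ → UnitAddCircle) := QuotientAddGroup.mk_surjective

theorem coe_eq_coe_iff {x y : ℝ} : (x : UnitAddCircle) = y ↔ ∃ m : ℤ, y = x + m := by
  rw [QuotientAddGroup.eq, AddSubgroup.mem_zmultiples_iff]
  refine exists_congr fun m => ?_
  simp only [zsmul_eq_mul, mul_one]
  constructor <;> intro h <;> linarith

theorem coe_add_intCast (x : ℝ) (m : ℤ) : ((x + m : ℝ) : UnitAddCircle) = x :=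
  coe_eq_coe_iff.2 ⟨-m, by push_cast; ring⟩

theorem dist_coe_le (u v : ℝ) : dist (u : UnitAddCircle) v ≤ |u - v| := by
  rw [dist_eq_norm, ← AddCircle.coe_sub]
  exact QuotientAddGroup.norm_mk_le_norm

theorem exists_int_forall_eq_add_of_coe_eq {F G : ℝ → ℝ} (hF : Continuous F) (hG : Continuous G)
    (h : ∀ x, (F x : UnitAddCircle) = G x) : ∃ m : ℤ, ∀ x, G x = F x + m := by
  have hmem : ∀ x, -F x + G x ∈ AddSubgroup.zmultiples (1 : ℝ) :=
    fun x => QuotientAddGroup.eq.1 (h x)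
  have hconst : ∀ x, -F x + G x = -F 0 + G 0 := fun x =>
    isPreconnected_univ.constant_of_mapsTo
      (isDiscrete_iff_discreteTopology.2 (inferInstance :
        DiscreteTopology (AddSubgroup.zmultiples (1 : ℝ)))) (hF.neg.add hG).continuousOn
      (fun x _ => hmem x) (mem_univ x) (mem_univ 0)
  obtain ⟨m, hm⟩ := AddSubgroup.mem_zmultiples_iff.1 (hmem 0)
  refine ⟨m, fun x => ?_⟩
  have := hconst x
  simp only [zsmul_eq_mul, mul_one] at hm
  linarith

theorem eq_of_coe_eq {F G : ℝ → ℝ} (hF : Continuous F) (hG : Continuous G)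
    (h : ∀ x, (F x : UnitAddCircle) = G x) {s : ℝ} (hs : F s = G s) : F = G := by
  obtain ⟨m, hm⟩ := exists_int_forall_eq_add_of_coe_eq hF hG h
  have hm0 : (m : ℝ) = 0 := by linarith [hm s]
  funext x
  rw [hm, hm0, add_zero]

end UnitAddCircle

namespace CircleDeg1Lift

local notation "τ" => translationNumber

theorem abs_map_sub_sub_translationNumber_lt (f : CircleDeg1Lift) (x : ℝ) :
    |f x - x - τ f| < 1 := by
  have h1 := f.floor_sub_le_translationNumber x
  have h2 := f.translationNumber_le_ceil_sub x
  have h3 := Int.lt_floor_add_one (f x - x)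
  have h4 := Int.ceil_lt_add_one (f x - x)
  rw [abs_lt]
  constructor <;> linarith

theorem translationNumber_eq_add_intCast_of_forall {f g : CircleDeg1Lift} {m : ℤ}
    (h : ∀ x, g x = f x + m) : τ g = τ f + m := by
  set t := translate (Multiplicative.ofAdd (m : ℝ))
  have hg : g = t * f := ext fun x => by
    rw [h, mul_apply, translate_apply, add_comm]
  have hcomm : Commute (t : CircleDeg1Lift) f := commute_iff_commute.2 fun x => by
    simp only [t, translate_apply, map_int_add]
  rw [hg, translationNumber_mul_of_commute hcomm, translationNumber_translate, add_comm]

theorem translationNumber_mul_comm (f g : CircleDeg1Lift) : τ (f * g) = τ (g * f) :=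
  translationNumber_eq_of_semiconjBy (f := g) (mul_assoc g f g).symm

theorem translationNumber_mul_of_forall_le {f g : CircleDeg1Lift} {S : Set ℝ} (hS : S.Nonempty)
    (hfS : MapsTo f S S) (hgS : MapsTo g S S) (h : ∀ y ∈ S, f (g y) ≤ g (f y)) :
    τ (f * g) = τ f + τ g := by
  obtain ⟨y, hy⟩ := hS
  have hpow : ∀ (w : CircleDeg1Lift) (n : ℕ) (x : ℝ), |(w ^ n) x - x - n * τ w| < 1 :=
    fun w n x => by
      simpa [translationNumber_pow] using (w ^ n).abs_map_sub_sub_translationNumber_lt x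
  refine eq_of_forall_nat_mul_abs_sub_lt (C := 3) fun n => ?_
  have hlow := iterate_iterate_le_iterate_comp_of_mapsTo f.monotone g.monotone hfS hgS h n y hy
  have hup := iterate_iterate_le_iterate_comp_of_mapsTo (α := ℝᵒᵈ) g.monotone.dual
    f.monotone.dual hgS hfS h n y hy
  change (g ∘ f)^[n] y ≤ g^[n] (f^[n] y) at hup
  rw [← coe_mul, ← coe_pow, ← coe_pow, ← coe_pow] at hlow hup
  have := hpow (f * g) n y
  have := hpow (g * f) n y
  have := hpow f n ((g ^ n) y)
  have := hpow f n y
  have := hpow g n y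
  have := hpow g n ((f ^ n) y)
  rw [translationNumber_mul_comm g f] at *
  rw [← abs_of_nonneg (n.cast_nonneg : (0 : ℝ) ≤ n), ← abs_mul, abs_lt]
  simp only [abs_lt] at *
  constructor <;> linarith

end CircleDeg1Lift

namespace CircleHomeomorph

open UnitAddCircle

@[simp]
theorem mul_apply (f g : UnitAddCircle ≃ₜ UnitAddCircle) (q : UnitAddCircle) :
    (f * g) q = f (g q) := rfl

@[simp]
theorem one_apply (q : UnitAddCircle) : (1 : UnitAddCircle ≃ₜ UnitAddCircle) q = q := rfl

structure IsLiftOfDegree (f : UnitAddCircle ≃ₜ UnitAddCircle) (F : ℝ → ℝ) (d : ℤ) : Prop where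
  continuous : Continuous F
  map_add_one : ∀ x, F (x + 1) = F x + d
  apply_coe : ∀ x : ℝ, f x = F x

namespace IsLiftOfDegree

variable {f g : UnitAddCircle ≃ₜ UnitAddCircle} {F G : ℝ → ℝ} {d e : ℤ}

theorem map_add_intCast (hF : IsLiftOfDegree f F d) (x : ℝ) (n : ℤ) :
    F (x + n) = F x + n * d := by
  have hper : Periodic (fun x => F x - d * x) 1 := fun x => by
    simp only [hF.map_add_one]
    ring
  have := hper.int_mul n x
  simp only [mul_one] at this
  linarith

theorem degree_eq (hF : IsLiftOfDegree f F d) (hG : IsLiftOfDegree f G e) : d = e := by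
  obtain ⟨m, hm⟩ :=
    exists_int_forall_eq_add_of_coe_eq hF.continuous hG.continuous fun x => by
      rw [← hF.apply_coe, hG.apply_coe]
  have h := hG.map_add_one 0
  rw [hm, hm, hF.map_add_one] at h
  exact_mod_cast (by linarith : (d : ℝ) = e)

theorem one : IsLiftOfDegree 1 id 1 := ⟨continuous_id, fun x => by simp, fun _ => rfl⟩

theorem mul (hF : IsLiftOfDegree f F d) (hG : IsLiftOfDegree g G e) :
    IsLiftOfDegree (f * g) (F ∘ G) (d * e) :=
  ⟨hF.continuous.comp hG.continuous, fun x => by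
    simp only [comp_apply, hG.map_add_one, hF.map_add_intCast]
    push_cast
    ring, fun x => by simp only [mul_apply, comp_apply, hG.apply_coe, hF.apply_coe]⟩

theorem isOPLift (hF : IsLiftOfDegree f F 1) : IsOPLift f F := by
  have hinj : Injective F := fun x y hxy => by
    have hfxy : f x = f y := by rw [hF.apply_coe, hF.apply_coe, hxy]
    obtain ⟨m, rfl⟩ := coe_eq_coe_iff.1 (f.injective hfxy)
    rw [hF.map_add_intCast, Int.cast_one, mul_one] at hxy
    have : (m : ℝ) = 0 := by linarith
    simp [this]
  have hmono : StrictMono F := (hF.continuous.strictMono_of_inj hinj).resolve_right fun hanti => by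
    have h := hanti (lt_add_one (0 : ℝ))
    rw [hF.map_add_one] at h
    norm_num at h
  exact ⟨hF.continuous, hmono, fun x => by simpa using hF.map_add_one x, hF.apply_coe⟩

end IsLiftOfDegree

variable {Γ : Type*} [Group Γ]

noncomputable def degreeHom (ρ : Γ →* (UnitAddCircle ≃ₜ UnitAddCircle))
    (hρ : ∀ γ, ∃ d F, IsLiftOfDegree (ρ γ) F d) : Γ →* ℤ where
  toFun γ := (hρ γ).choose
  map_one' := (hρ 1).choose_spec.choose_spec.degree_eq (by rw [map_one]; exact IsLiftOfDegree.one)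
  map_mul' γ δ := (hρ (γ * δ)).choose_spec.choose_spec.degree_eq (by
    rw [map_mul]; exact (hρ γ).choose_spec.choose_spec.mul (hρ δ).choose_spec.choose_spec)

end CircleHomeomorph

open CircleHomeomorph UnitAddCircle

theorem IsC1Lift.exists_isLiftOfDegree {f : UnitAddCircle ≃ₜ UnitAddCircle} {F : ℝ → ℝ}
    (hF : IsC1Lift f F) : ∃ d, IsLiftOfDegree f F d := by
  obtain ⟨hC, -, hper | hper, hdesc⟩ := hF
  · exact ⟨1, hC.continuous, fun x => by simp [hper], hdesc⟩
  · exact ⟨-1, hC.continuous, fun x => by simp [hper, sub_eq_add_neg], hdesc⟩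

theorem IsC1Action.exists_isOPLift {Γ : Type*} [Group Γ] [Subsingleton (Abelianization Γ)]
    {ρ : Γ →* (UnitAddCircle ≃ₜ UnitAddCircle)} (hρ : IsC1Action ρ) (γ : Γ) :
    ∃ F, IsOPLift (ρ γ) F := by
  have hdeg : ∀ γ, ∃ d F, IsLiftOfDegree (ρ γ) F d := fun γ =>
    let ⟨F, hF⟩ := hρ γ
    let ⟨d, hd⟩ := hF.exists_isLiftOfDegree
    ⟨d, F, hd⟩
  have h1 : (hdeg γ).choose = 1 :=
    (degreeHom ρ hdeg).apply_eq_one_of_subsingleton_abelianization γ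
  obtain ⟨F, hF⟩ := (hdeg γ).choose_spec
  exact ⟨F, (h1 ▸ hF).isOPLift⟩

namespace IsOPLift

local notation "τ" => CircleDeg1Lift.translationNumber

variable {f g : UnitAddCircle ≃ₜ UnitAddCircle} {F G : ℝ → ℝ}

theorem continuous (hF : IsOPLift f F) : Continuous F := hF.1

theorem strictMono (hF : IsOPLift f F) : StrictMono F := hF.2.1

theorem map_add_one (hF : IsOPLift f F) (x : ℝ) : F (x + 1) = F x + 1 := hF.2.2.1 x

theorem apply_coe (hF : IsOPLift f F) (x : ℝ) : f x = F x := hF.2.2.2 x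

def toCircleDeg1Lift (hF : IsOPLift f F) : CircleDeg1Lift :=
  ⟨⟨F, hF.strictMono.monotone⟩, hF.map_add_one⟩

theorem one : IsOPLift 1 id := ⟨continuous_id, strictMono_id, fun _ => rfl, fun _ => rfl⟩

theorem mul (hF : IsOPLift f F) (hG : IsOPLift g G) : IsOPLift (f * g) (F ∘ G) :=
  ⟨hF.continuous.comp hG.continuous, hF.strictMono.comp hG.strictMono,
    fun x => by simp only [comp_apply, hG.map_add_one, hF.map_add_one],
    fun x => by simp only [mul_apply, comp_apply, hG.apply_coe, hF.apply_coe]⟩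

theorem add_intCast (hF : IsOPLift f F) (m : ℤ) : IsOPLift f (fun x => F x + m) :=
  ⟨hF.continuous.add continuous_const, fun _ _ h => by simpa using hF.strictMono h,
    fun x => by simp only [hF.map_add_one]; ring, fun x => by rw [hF.apply_coe, coe_add_intCast]⟩

theorem exists_int_eq_add (hF : IsOPLift f F) (hG : IsOPLift f G) :
    ∃ m : ℤ, ∀ x, G x = F x + m :=
  exists_int_forall_eq_add_of_coe_eq hF.continuous hG.continuous fun x => by
    rw [← hF.apply_coe, hG.apply_coe]

theorem mapsTo (hF : IsOPLift f F) {Λ : Set UnitAddCircle} (hΛ : MapsTo f Λ Λ) :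
    MapsTo F {y : ℝ | (y : UnitAddCircle) ∈ Λ} {y : ℝ | (y : UnitAddCircle) ∈ Λ} :=
  fun y (hy : (y : UnitAddCircle) ∈ Λ) => show ((F y : ℝ) : UnitAddCircle) ∈ Λ from
    hF.apply_coe y ▸ hΛ hy

theorem notMem_of_mem_Ioo (hF : IsOPLift f F) {Λ : Set UnitAddCircle}
    (hinv : MapsTo f.symm Λ Λ) {a b : ℝ} (hgap : ∀ w ∈ Ioo a b, (w : UnitAddCircle) ∉ Λ) :
    ∀ w ∈ Ioo (F a) (F b), (w : UnitAddCircle) ∉ Λ := by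
  intro w hw hwΛ
  obtain ⟨v, rfl⟩ := hF.continuous.surjective hF.toCircleDeg1Lift.tendsto_atTop
    hF.toCircleDeg1Lift.tendsto_atBot w
  refine hgap v ⟨hF.strictMono.lt_iff_lt.1 hw.1, hF.strictMono.lt_iff_lt.1 hw.2⟩ ?_
  simpa [← hF.apply_coe] using hinv hwΛ

theorem forall_le_or_forall_ge (hF : IsOPLift f F) {Λ : Set UnitAddCircle}
    (hfix : (∃ q, IsFixedPt f q) → ∀ q ∈ Λ, IsFixedPt f q) :
    (∀ y : ℝ, (y : UnitAddCircle) ∈ Λ → F y ≤ y) ∨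
      (∀ y : ℝ, (y : UnitAddCircle) ∈ Λ → y ≤ F y) := by
  by_cases hz : ∃ z, F z = z
  · -- `F` has translation number `0`, which forbids it to move a point by a nonzero integer
    obtain ⟨z, hz⟩ := hz
    refine Or.inl fun y hy => le_of_eq ?_
    have hτ : τ hF.toCircleDeg1Lift = (0 : ℤ) :=
      hF.toCircleDeg1Lift.translationNumber_of_eq_add_int (x := z)
        (by rw [Int.cast_zero, add_zero]; exact hz)
    have hfy : ((F y : ℝ) : UnitAddCircle) = y :=
      (hF.apply_coe y).symm.trans (hfix ⟨z, by rw [IsFixedPt, hF.apply_coe, hz]⟩ y hy)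
    obtain ⟨k, hk⟩ := coe_eq_coe_iff.1 hfy.symm
    have hk0 : (k : ℝ) = 0 := by
      rw [← hF.toCircleDeg1Lift.translationNumber_of_eq_add_int (x := y) hk, hτ, Int.cast_zero]
    rw [hk, hk0, add_zero]
  · push Not at hz
    by_contra! hsign
    obtain ⟨⟨a, -, ha⟩, ⟨b, -, hb⟩⟩ := hsign
    obtain ⟨z, hz'⟩ := intermediate_value_univ b a (hF.continuous.sub continuous_id)
      (show (0 : ℝ) ∈ Icc (F b - b) (F a - a) from ⟨by linarith, by linarith⟩)
    exact hz z (sub_eq_zero.1 hz')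

theorem forall_isFixedPt_of_finite (hF : IsOPLift f F) {O : Set UnitAddCircle} (hO : O.Finite)
    (hinv : MapsTo f O O) (hfix : ∃ q, IsFixedPt f q) : ∀ q ∈ O, IsFixedPt f q := by
  obtain ⟨q, hq⟩ := hfix
  obtain ⟨z, rfl⟩ := coe_surjective q
  obtain ⟨m, hm⟩ := coe_eq_coe_iff.1 ((hF.apply_coe z).symm.trans hq).symm
  set A := fun x => F x + ((-m : ℤ) : ℝ)
  have hA : IsOPLift f A := hF.add_intCast (-m)
  have hAz : A z = z := by
    simp only [A]
    push_cast
    linarith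
  set W := Ico z (z + 1) ∩ {y : ℝ | (y : UnitAddCircle) ∈ O}
  have hW : W.Finite := Finite.of_finite_image (hO.subset (image_subset_iff.2 fun y hy => hy.2))
    fun y hy y' hy' h => (AddCircle.coe_eq_coe_iff_of_mem_Ico hy.1 hy'.1).1 h
  have hmaps : MapsTo A W W := fun y hy =>
    ⟨⟨hAz ▸ hA.strictMono.monotone hy.1.1,
      (hA.strictMono hy.1.2).trans_eq (by rw [hA.map_add_one, hAz])⟩, hA.mapsTo hinv hy.2⟩
  intro p hp
  obtain ⟨y, rfl⟩ := coe_surjective p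
  have hy : y + ((-⌊y - z⌋ : ℤ) : ℝ) ∈ W := by
    refine ⟨⟨?_, ?_⟩, show ((_ : ℝ) : UnitAddCircle) ∈ O by
      rwa [coe_add_intCast]⟩ <;> push_cast
    · linarith [Int.floor_le (y - z)]
    · linarith [Int.lt_floor_add_one (y - z)]
  rw [IsFixedPt, ← coe_add_intCast y (-⌊y - z⌋), hA.apply_coe,
    hA.strictMono.eq_of_mapsTo_of_finite hW hmaps hy]

end IsOPLift

namespace CircleHomeomorph

local notation "τ" => CircleDeg1Lift.translationNumber

variable {Γ : Type*} [Group Γ] {ρ : Γ →* (UnitAddCircle ≃ₜ UnitAddCircle)}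

theorem eq_one_of_forall_isFixedPt [Subsingleton (Abelianization Γ)] (hfg : Group.FG Γ)
    (hρ : IsC1Action ρ) {q : UnitAddCircle} (hq : ∀ γ, IsFixedPt (ρ γ) q) (γ : Γ) :
    ρ γ = 1 := by
  obtain ⟨s, rfl⟩ := coe_surjective q
  have hnorm : ∀ γ, ∃ T : ℝ → ℝ, ContDiff ℝ 1 T ∧ (∀ x : ℝ, ρ γ x = T x) ∧ T s = s := by
    intro γ
    obtain ⟨F, hC, -, -, hF⟩ := hρ γ
    obtain ⟨m, hm⟩ := coe_eq_coe_iff.1 ((hF s).symm.trans (hq γ))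
    exact ⟨fun x => F x + m, hC.add contDiff_const, fun x => by rw [hF, coe_add_intCast],
      hm.symm⟩
  choose T hC hT hTs using hnorm
  have hmul : ∀ γ δ, T (γ * δ) = T γ ∘ T δ := fun γ δ =>
    eq_of_coe_eq (hC _).continuous ((hC γ).continuous.comp (hC δ).continuous)
      (fun x => by rw [← hT, map_mul, mul_apply, hT, hT, comp_apply]) (s := s)
      (by rw [comp_apply, hTs, hTs, hTs])
  have hone : T 1 = id := eq_of_coe_eq (hC 1).continuous continuous_id
    (fun x => by rw [← hT, map_one, one_apply, id]) (hTs 1)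
  refine Homeomorph.ext fun p => ?_
  obtain ⟨y, rfl⟩ := coe_surjective p
  obtain ⟨k, hk⟩ : ∃ k : ℤ, s ≤ y + k := ⟨⌈s - y⌉, by linarith [Int.le_ceil (s - y)]⟩
  rw [← coe_add_intCast y k, hT, Thurston.apply_eq_self_of_le hfg hC hmul hone hTs hk γ,
    one_apply]

theorem translationNumber_mul_of_isFixedPt_imp (hop : ∀ γ, ∃ F, IsOPLift (ρ γ) F)
    {Λ : Set UnitAddCircle} (hne : Λ.Nonempty) (hinv : ∀ γ, MapsTo (ρ γ) Λ Λ)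
    (hfix : ∀ γ, (∃ q, IsFixedPt (ρ γ) q) → ∀ q ∈ Λ, IsFixedPt (ρ γ) q)
    {γ δ : Γ} {F G : ℝ → ℝ} (hF : IsOPLift (ρ γ) F) (hG : IsOPLift (ρ δ) G) :
    τ (hF.toCircleDeg1Lift * hG.toCircleDeg1Lift) =
      τ hF.toCircleDeg1Lift + τ hG.toCircleDeg1Lift := by
  obtain ⟨q, hq⟩ := hne
  obtain ⟨y, rfl⟩ := coe_surjective q
  have hS : {y : ℝ | (y : UnitAddCircle) ∈ Λ}.Nonempty := ⟨y, hq⟩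
  -- `C` lifts the commutator of `γ` and `δ`, shifted so that `C ∘ G ∘ F = F ∘ G`
  obtain ⟨C, hC⟩ := hop (γ * δ * (δ * γ)⁻¹)
  have hCGF : IsOPLift (ρ γ * ρ δ) (C ∘ (G ∘ F)) := by
    convert hC.mul (hG.mul hF) using 1
    rw [← map_mul, ← map_mul, ← map_mul, inv_mul_cancel_right]
  obtain ⟨m, hm⟩ := hCGF.exists_int_eq_add (hF.mul hG)
  rcases (hC.add_intCast m).forall_le_or_forall_ge (hfix _) with hle | hge
  · exact CircleDeg1Lift.translationNumber_mul_of_forall_le hS (hF.mapsTo (hinv γ))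
      (hG.mapsTo (hinv δ)) fun y hy =>
        (hm y).trans_le (hle _ ((hG.mapsTo (hinv δ)).comp (hF.mapsTo (hinv γ)) hy))
  · rw [CircleDeg1Lift.translationNumber_mul_comm, add_comm]
    exact CircleDeg1Lift.translationNumber_mul_of_forall_le hS (hG.mapsTo (hinv δ))
      (hF.mapsTo (hinv γ)) fun y hy =>
        (hge _ ((hG.mapsTo (hinv δ)).comp (hF.mapsTo (hinv γ)) hy)).trans_eq (hm y).symm

theorem exists_isFixedPt_of_translationNumber_mul [Subsingleton (Abelianization Γ)]
    {F : Γ → ℝ → ℝ} (hF : ∀ γ, IsOPLift (ρ γ) (F γ))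
    (hτ : ∀ γ δ, τ ((hF γ).toCircleDeg1Lift * (hF δ).toCircleDeg1Lift) =
      τ (hF γ).toCircleDeg1Lift + τ (hF δ).toCircleDeg1Lift) (γ : Γ) :
    ∃ q, IsFixedPt (ρ γ) q := by
  set L := fun γ => (hF γ).toCircleDeg1Lift
  have hmul : ∀ γ δ, ∃ m : ℤ, τ (L (γ * δ)) = τ (L γ) + τ (L δ) + m := fun γ δ => by
    obtain ⟨m, hm⟩ := ((hF γ).mul (hF δ)).exists_int_eq_add (map_mul ρ γ δ ▸ hF (γ * δ))
    exact ⟨m, by rw [CircleDeg1Lift.translationNumber_eq_add_intCast_of_forall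
      (f := L γ * L δ) hm, hτ]⟩
  have hone : ∃ m : ℤ, τ (L 1) = m := by
    obtain ⟨m, hm⟩ := IsOPLift.one.exists_int_eq_add (map_one ρ ▸ hF 1)
    exact ⟨m, by rw [CircleDeg1Lift.translationNumber_eq_add_intCast_of_forall (f := 1) hm,
      CircleDeg1Lift.translationNumber_one, zero_add]⟩
  let rotation : Γ →* Multiplicative UnitAddCircle :=
    { toFun := fun γ => Multiplicative.ofAdd (τ (L γ) : UnitAddCircle)
      map_one' := by
        obtain ⟨m, hm⟩ := hone
        rw [hm, ← zero_add (m : ℝ), coe_add_intCast]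
        rfl
      map_mul' := fun γ δ => by
        obtain ⟨m, hm⟩ := hmul γ δ
        rw [hm, coe_add_intCast]
        rfl }
  have hrot : ((τ (L γ) : ℝ) : UnitAddCircle) = (0 : ℝ) :=
    congrArg Multiplicative.toAdd (rotation.apply_eq_one_of_subsingleton_abelianization γ)
  obtain ⟨k, hk⟩ := coe_eq_coe_iff.1 hrot.symm
  obtain ⟨x, hx⟩ := ((L γ).translationNumber_eq_int_iff (hF γ).continuous).1 (by rw [hk, zero_add])
  exact ⟨x, by rw [IsFixedPt, (hF γ).apply_coe, show F γ x = x + k from hx, coe_add_intCast]⟩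

theorem eq_one_of_isFixedPt_imp_forall_isFixedPt [Subsingleton (Abelianization Γ)]
    (hfg : Group.FG Γ) (hρ : IsC1Action ρ) {Λ : Set UnitAddCircle} (hne : Λ.Nonempty)
    (hinv : ∀ γ, MapsTo (ρ γ) Λ Λ)
    (hfix : ∀ γ, (∃ q, IsFixedPt (ρ γ) q) → ∀ q ∈ Λ, IsFixedPt (ρ γ) q) (γ : Γ) :
    ρ γ = 1 := by
  choose F hF using hρ.exists_isOPLift
  obtain ⟨q, hq⟩ := hne
  refine eq_one_of_forall_isFixedPt hfg hρ (q := q) (fun γ => hfix γ ?_ q hq) γ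
  exact exists_isFixedPt_of_translationNumber_mul hF (fun γ δ =>
    translationNumber_mul_of_isFixedPt_imp hρ.exists_isOPLift ⟨q, hq⟩ hinv hfix (hF γ) (hF δ)) γ

theorem mapsTo_range_apply (γ : Γ) (q : UnitAddCircle) :
    MapsTo (ρ γ) (range fun δ => ρ δ q) (range fun δ => ρ δ q) := by
  rintro _ ⟨δ, rfl⟩
  exact ⟨γ * δ, by simp only [map_mul, mul_apply]⟩

theorem mapsTo_closure_range_apply (γ : Γ) (q : UnitAddCircle) :
    MapsTo (ρ γ) (closure (range fun δ => ρ δ q)) (closure (range fun δ => ρ δ q)) :=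
  (mapsTo_range_apply γ q).closure (ρ γ).continuous

theorem exists_mem_closure_range_of_forall_exists_sub_lt {F : Γ → ℝ → ℝ}
    (hF : ∀ γ, IsOPLift (ρ γ) (F γ)) {Λ : Set UnitAddCircle} (hΛ : IsClosed Λ)
    (hinv : ∀ γ, MapsTo (ρ γ) Λ Λ) {a b x : ℝ} (ha : (a : UnitAddCircle) ∈ Λ)
    (hx : x ∈ Ioo a b) (hsmall : ∀ ε > 0, ∃ γ, F γ b - F γ a < ε) :
    ∃ z ∈ Λ, z ∈ closure (range fun γ => ρ γ x) := by
  by_contra! h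
  obtain ⟨δ, hδ, hthick⟩ :=
    (disjoint_left.2 h).exists_thickenings hΛ.isCompact isClosed_closure
  obtain ⟨γ, hγ⟩ := hsmall δ hδ
  have hnear : ρ γ x ∈ Metric.thickening δ Λ := by
    refine Metric.mem_thickening_iff.2 ⟨_, hinv γ ha, ?_⟩
    rw [(hF γ).apply_coe, (hF γ).apply_coe]
    refine (dist_coe_le _ _).trans_lt ?_
    rw [abs_of_pos (sub_pos.2 ((hF γ).strictMono hx.1))]
    linarith [(hF γ).strictMono hx.2]
  exact disjoint_left.1 hthick hnear
    (Metric.self_subset_thickening hδ _ (subset_closure ⟨γ, rfl⟩))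

theorem finite_range_apply_of_forall_le_sub {F : Γ → ℝ → ℝ}
    (hF : ∀ γ, IsOPLift (ρ γ) (F γ)) {Λ : Set UnitAddCircle} (hinv : ∀ γ, MapsTo (ρ γ) Λ Λ)
    {a b : ℝ} (ha : (a : UnitAddCircle) ∈ Λ) (hgap : ∀ w ∈ Ioo a b, (w : UnitAddCircle) ∉ Λ)
    {ε : ℝ} (hε : 0 < ε) (hlarge : ∀ γ, ε ≤ F γ b - F γ a) :
    (range fun γ => ρ γ a).Finite := by
  -- the orbit of `a` consists of left ends of gaps of `Λ` of length at least `ε`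
  set P := {c ∈ Ico (0 : ℝ) 1 | (c : UnitAddCircle) ∈ Λ ∧ ∀ w ∈ Ioo c (c + ε),
    (w : UnitAddCircle) ∉ Λ}
  have hP : P.Finite := finite_of_subset_Ico_of_add_le (fun c hc => hc.1) hε
    fun c hc c' hc' hlt => not_lt.1 fun h => hc.2.2 c' ⟨hlt, h⟩ hc'.2.1
  refine (hP.image ((↑) : ℝ → UnitAddCircle)).subset ?_
  rintro _ ⟨γ, rfl⟩
  have hinv' : MapsTo (ρ γ).symm Λ Λ := by
    have := hinv γ⁻¹
    rwa [map_inv] at this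
  refine ⟨Int.fract (F γ a), ⟨⟨Int.fract_nonneg _, Int.fract_lt_one _⟩, ?_,
    fun w hw hwΛ => ?_⟩, ?_⟩
  · rw [AddCircle.coe_fract, ← (hF γ).apply_coe]
    exact hinv γ ha
  · rw [Int.fract] at hw
    refine (hF γ).notMem_of_mem_Ioo hinv' hgap (w + ⌊F γ a⌋) ⟨?_, ?_⟩ (by rwa [coe_add_intCast])
    · linarith [hw.1]
    · linarith [hw.2, hlarge γ]
  · rw [AddCircle.coe_fract]
    exact ((hF γ).apply_coe a).symm

theorem exists_mem_closure_range_apply (hop : ∀ γ, ∃ F, IsOPLift (ρ γ) F)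
    (hnofin : ¬∃ O : Set UnitAddCircle, O.Finite ∧ O.Nonempty ∧ ∀ γ, MapsTo (ρ γ) O O)
    {Λ : Set UnitAddCircle} (hΛ : IsClosed Λ) (hne : Λ.Nonempty) (hinv : ∀ γ, MapsTo (ρ γ) Λ Λ)
    (q : UnitAddCircle) : ∃ z ∈ Λ, z ∈ closure (range fun γ => ρ γ q) := by
  by_cases hq : q ∈ Λ
  · exact ⟨q, hq, subset_closure ⟨1, by simp only [map_one, one_apply]⟩⟩
  choose F hF using hop
  obtain ⟨x, rfl⟩ := coe_surjective q
  obtain ⟨p, hp⟩ := hne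
  obtain ⟨s, rfl⟩ := coe_surjective p
  obtain ⟨a, ha, b, -, hx, hgap⟩ := (hΛ.preimage (AddCircle.continuous_mk' 1)).exists_Ioo_disjoint
    (x := x) hq (a₀ := s + ⌊x - s⌋) (b₀ := s + ⌈x - s⌉)
    (show ((_ : ℝ) : UnitAddCircle) ∈ Λ by rwa [coe_add_intCast])
    (show ((_ : ℝ) : UnitAddCircle) ∈ Λ by rwa [coe_add_intCast])
    (by linarith [Int.floor_le (x - s)]) (by linarith [Int.le_ceil (x - s)])
  by_cases hsmall : ∀ ε > 0, ∃ γ, F γ b - F γ a < ε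
  · exact exists_mem_closure_range_of_forall_exists_sub_lt hF hΛ hinv ha hx hsmall
  push Not at hsmall
  obtain ⟨ε, hε, hlarge⟩ := hsmall
  exact (hnofin ⟨_, finite_range_apply_of_forall_le_sub hF hinv ha
    (fun w hw => disjoint_left.1 hgap hw) hε hlarge, range_nonempty _,
    fun γ => mapsTo_range_apply γ _⟩).elim

theorem exists_least_isClosed_invariant (hop : ∀ γ, ∃ F, IsOPLift (ρ γ) F)
    (hnofin : ¬∃ O : Set UnitAddCircle, O.Finite ∧ O.Nonempty ∧ ∀ γ, MapsTo (ρ γ) O O) :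
    ∃ Λ : Set UnitAddCircle, IsClosed Λ ∧ Λ.Nonempty ∧ (∀ γ, MapsTo (ρ γ) Λ Λ) ∧
      ∀ Y, IsClosed Y → Y.Nonempty → (∀ γ, MapsTo (ρ γ) Y Y) → Λ ⊆ Y := by
  obtain ⟨Λ, hΛ, hne, hinv, hmin⟩ := exists_minimal_isClosed_invariant fun γ => ρ γ
  refine ⟨Λ, hΛ, hne, hinv, fun Y hY hYne hYinv => ?_⟩
  obtain ⟨q, hq⟩ := hYne
  obtain ⟨z, hzΛ, hz⟩ := exists_mem_closure_range_apply hop hnofin hΛ hne hinv q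
  have hz1 : z ∈ range fun γ => ρ γ z := ⟨1, by simp only [map_one, one_apply]⟩
  calc Λ ⊆ closure (range fun γ => ρ γ z) :=
        hmin _ (closure_minimal (range_subset_iff.2 fun γ => hinv γ hzΛ) hΛ) isClosed_closure
          ⟨z, subset_closure hz1⟩ (mapsTo_closure_range_apply · z)
    _ ⊆ closure (range fun γ => ρ γ q) := closure_minimal
        (range_subset_iff.2 fun γ => mapsTo_closure_range_apply γ q hz) isClosed_closure
    _ ⊆ Y := closure_minimal (range_subset_iff.2 fun γ => hYinv γ hq) hY

end CircleHomeomorph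

/-- **Theorem (main).** If `H` and `G` are finitely generated groups with trivial
abelianization, then for any `C¹` action of `H × G` on the circle, either the
factor `H × 1` acts trivially or the factor `1 × G` acts trivially. -/
theorem c1_action_of_product_of_perfect_groups_has_trivial_factor
    {H G : Type*} [Group H] [Group G]
    (hHfg : Group.FG H) (hGfg : Group.FG G)
    (hHab : Subsingleton (Abelianization H)) (hGab : Subsingleton (Abelianization G))
    (ρ : (H × G) →* (UnitAddCircle ≃ₜ UnitAddCircle))
    (hρ : IsC1Action ρ) :
    (∀ h : H, ρ (h, 1) = Homeomorph.refl UnitAddCircle) ∨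
      (∀ g : G, ρ (1, g) = Homeomorph.refl UnitAddCircle) := by
  set ρH := ρ.comp (MonoidHom.inl H G)
  set ρG := ρ.comp (MonoidHom.inr H G)
  have hρH : IsC1Action ρH := fun h => hρ (h, 1)
  have hρG : IsC1Action ρG := fun g => hρ (1, g)
  have hcomm : ∀ h g, Function.Commute (ρH h) (ρG g) := fun h g q => by
    simp only [ρH, ρG, MonoidHom.comp_apply, ← mul_apply, ← map_mul, MonoidHom.inl_apply,
      MonoidHom.inr_apply, Prod.mk_mul_mk, mul_one, one_mul]
  by_cases hfin : ∃ O : Set UnitAddCircle, O.Finite ∧ O.Nonempty ∧ ∀ h, MapsTo (ρH h) O O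
  · obtain ⟨O, hO, hne, hinv⟩ := hfin
    exact Or.inl (eq_one_of_isFixedPt_imp_forall_isFixedPt hHfg hρH hne hinv fun h =>
      (hρH.exists_isOPLift h).choose_spec.forall_isFixedPt_of_finite hO (hinv h))
  · obtain ⟨Λ, hΛ, hne, hinv, hmin⟩ := exists_least_isClosed_invariant hρH.exists_isOPLift hfin
    refine Or.inr (eq_one_of_isFixedPt_imp_forall_isFixedPt hGfg hρG hne (fun g => ?_)
      fun g hfix => ?_)
    · exact hmin _ (hΛ.preimage (ρG g).continuous) (hne.preimage (ρG g).surjective)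
        fun h q hq => mem_preimage.2 (hcomm h g q ▸ hinv h hq)
    · exact hmin _ (isClosed_eq (ρG g).continuous continuous_id) hfix
        fun h q hq => IsFixedPt.map hq (hcomm h g)
end

section
/- (Thurston's Stability Lemma) Let G be a finitely generated group, n a natural number, and ρ : G → Perm(ℝⁿ) a group homomorphism into the group of bijections of ℝⁿ (taken as EuclideanSpace ℝ (Fin n)) such that for every g ∈ G the map ρ(g) : ℝⁿ → ℝⁿ is of class C¹. Suppose there is a point x ∈ ℝⁿ with ρ(g)(x) = x for all g ∈ G, and the Fréchet derivative of ρ(g) at x is the identity linear map for all g ∈ G. Then either there exists a nontrivial group homomorphism from G to the additive group (ℝ,+), or ρ(g)(y) = y for all g ∈ G and all y ∈ ℝⁿ. -/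
/-!
Let `D g z = ρ g z - z` and let `M z = ∑ₛ ‖D s z‖` be the total displacement of a finite
generating set. As every `ρ g` is tangent to the identity at the fixed point `p`,
`D(gh) z = D g z + D h z + o(D h z)`, so `D g z = O(M z)` and the rescaled displacements
`(M z)⁻¹ • D g z` are additive in `g` up to `o(1)` as `z → p`. If points arbitrarily close to
`p` are moved, their limit along an ultrafilter is a homomorphism `G → ℝⁿ` of total norm `1`
on the generators, and a linear functional makes it a nontrivial homomorphism `G → ℝ`.
Otherwise `G` acts trivially near `p`; the set of points near which `G` acts trivially is then
open, closed (fixed points and identity derivatives pass to limits of `C¹` maps) and nonempty.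
-/

open Filter Topology Asymptotics

theorem HasStrictFDerivAt.isLittleO_comp_sub_sub {V : Type*} [NormedAddCommGroup V]
    [NormedSpace ℝ V] {f g : V → V} {p : V}
    (hf : HasStrictFDerivAt f (.id ℝ V) p) (hg : ContinuousAt g p) (hgp : g p = p) :
    (fun z => (f (g z) - z) - (f z - z) - (g z - z)) =o[𝓝 p] fun z => g z - z := by
  have hpair : Tendsto (fun z => (g z, z)) (𝓝 p) (𝓝 (p, p)) := by
    simpa only [hgp, id] using hg.tendsto.prodMk_nhds tendsto_id
  refine ((hasStrictFDerivAt_iff_isLittleO.mp hf).comp_tendsto hpair).congr_left fun z => ?_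
  simp only [Function.comp_apply, ContinuousLinearMap.id_apply]
  abel

theorem Ultrafilter.exists_tendsto_of_isBoundedUnder {α V : Type*} [NormedAddCommGroup V]
    [ProperSpace V] (U : Ultrafilter α) {u : α → V}
    (hu : IsBoundedUnder (· ≤ ·) U fun a => ‖u a‖) : ∃ v, Tendsto u U (𝓝 v) := by
  obtain ⟨C, hC⟩ := hu
  obtain ⟨v, -, hv⟩ := (isCompact_closedBall (0 : V) C).ultrafilter_le_nhds' (U.map u)
    (Ultrafilter.mem_map.mpr <| (eventually_map.mp hC).mono fun _ ha =>
      mem_closedBall_zero_iff.mpr ha)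
  exact ⟨v, hv⟩

theorem exists_monoidHom_tendsto_of_tendsto_mul_sub {G α V : Type*} [Monoid G]
    [NormedAddCommGroup V] [ProperSpace V] (U : Ultrafilter α) (u : G → α → V)
    (hbdd : ∀ g, IsBoundedUnder (· ≤ ·) U fun a => ‖u g a‖)
    (hmul : ∀ g h, Tendsto (fun a => u (g * h) a - u g a - u h a) U (𝓝 0)) :
    ∃ φ : G →* Multiplicative V, ∀ g, Tendsto (u g) U (𝓝 (φ g).toAdd) := by
  choose v hv using fun g => U.exists_tendsto_of_isBoundedUnder (hbdd g)
  have hadd : ∀ g h, v (g * h) = v g + v h := fun g h => by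
    refine tendsto_nhds_unique (hv (g * h)) ?_
    simpa using ((hv g).add (hv h)).add (hmul g h)
  refine ⟨{ toFun := fun g => .ofAdd (v g), map_one' := ?_, map_mul' := ?_ }, hv⟩
  · simpa using hadd 1 1
  · exact fun g h => by simp [hadd]

theorem exists_monoidHom_real_ne_one {G V : Type*} [Monoid G] [NormedAddCommGroup V]
    [NormedSpace ℝ V] (φ : G →* Multiplicative V) (hφ : φ ≠ 1) :
    ∃ ψ : G →* Multiplicative ℝ, ψ ≠ 1 := by
  obtain ⟨g, hg⟩ := DFunLike.ne_iff.mp hφ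
  have hv : (φ g).toAdd ≠ 0 := hg
  obtain ⟨f, -, hfv⟩ := exists_dual_vector ℝ _ (norm_ne_zero_iff.mpr hv)
  refine ⟨(AddMonoidHom.toMultiplicative f.toLinearMap.toAddMonoidHom).comp φ,
    DFunLike.ne_iff.mpr ⟨g, ?_⟩⟩
  simpa [hfv] using hv

theorem apply_eq_self_of_closure_eq_top {G X : Type*} [Monoid G] {S : Set G}
    (hS : Submonoid.closure S = ⊤) (ρ : G →* Equiv.Perm X) {z : X}
    (hz : ∀ s ∈ S, ρ s z = z) (g : G) : ρ g z = z := by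
  induction g using Submonoid.induction_of_closure_eq_top_right hS with
  | one => simp
  | mul_right g s hs ih => simp [hz s hs, ih]

section Displacement

variable {G V : Type*} [Monoid G] [NormedAddCommGroup V] [NormedSpace ℝ V]
  {ρ : G →* Equiv.Perm V} {p : V}

theorem isLittleO_sub_self_mul {g h : G} (hg : HasStrictFDerivAt (ρ g) (.id ℝ V) p)
    (hh : HasStrictFDerivAt (ρ h) (.id ℝ V) p) (hhp : ρ h p = p) :
    (fun z => (ρ (g * h) z - z) - (ρ g z - z) - (ρ h z - z)) =o[𝓝 p] fun z => ρ h z - z := by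
  simpa only [map_mul, Equiv.Perm.mul_apply] using hg.isLittleO_comp_sub_sub hh.continuousAt hhp

theorem isBigO_sub_self_sum_generators (hρ : ∀ g, HasStrictFDerivAt (ρ g) (.id ℝ V) p)
    (hfix : ∀ g, ρ g p = p) {S : Finset G} (hS : Submonoid.closure (S : Set G) = ⊤) (g : G) :
    (fun z => ρ g z - z) =O[𝓝 p] fun z => ∑ s ∈ S, ‖ρ s z - z‖ := by
  have hgen : ∀ s ∈ S,
      (fun z => ρ s z - z) =O[𝓝 p] fun z => ∑ s ∈ S, ‖ρ s z - z‖ :=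
    fun s hs => .of_bound 1 <| .of_forall fun z => by
      rw [one_mul, Real.norm_of_nonneg (by positivity)]
      exact Finset.single_le_sum (f := fun s => ‖ρ s z - z‖) (fun _ _ => norm_nonneg _) hs
  induction g using Submonoid.induction_of_closure_eq_top_right hS with
  | one => simpa using isBigO_zero _ _
  | mul_right g s hs ih =>
    refine (((isLittleO_sub_self_mul (hρ g) (hρ s) (hfix s)).isBigO.trans (hgen s hs)).add
      (ih.add (hgen s hs))).congr_left fun z => ?_
    abel

theorem exists_monoidHom_ne_one_of_frequently [FiniteDimensional ℝ V]
    (hρ : ∀ g, HasStrictFDerivAt (ρ g) (.id ℝ V) p) (hfix : ∀ g, ρ g p = p) {S : Finset G}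
    (hS : Submonoid.closure (S : Set G) = ⊤)
    (hmove : ∃ᶠ z in 𝓝 p, ∑ s ∈ S, ‖ρ s z - z‖ ≠ 0) :
    ∃ φ : G →* Multiplicative V, φ ≠ 1 := by
  set M : V → ℝ := fun z => ∑ s ∈ S, ‖ρ s z - z‖
  have : (𝓝 p ⊓ 𝓟 {z | M z ≠ 0}).NeBot := frequently_iff_neBot.mp hmove
  set U := Ultrafilter.of (𝓝 p ⊓ 𝓟 {z | M z ≠ 0})
  have hUp : ↑U ≤ 𝓝 p := (Ultrafilter.of_le _).trans inf_le_left
  have hUM : ∀ᶠ z in U, M z ≠ 0 :=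
    Ultrafilter.of_le _ (mem_inf_of_right (mem_principal_self _))
  set u : G → V → V := fun g z => (M z)⁻¹ • (ρ g z - z)
  have hbdd : ∀ g, IsBoundedUnder (· ≤ ·) U fun z => ‖u g z‖ := fun g => by
    have := (isBigO_sub_self_sum_generators hρ hfix hS g).mono hUp
    rw [isBigO_iff_isBoundedUnder_le_div hUM] at this
    simpa [u, norm_smul, div_eq_inv_mul] using this
  have hmul : ∀ g h, Tendsto (fun z => u (g * h) z - u g z - u h z) U (𝓝 0) := fun g h => by
    have := (((isLittleO_sub_self_mul (hρ g) (hρ h) (hfix h)).trans_isBigO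
      (isBigO_sub_self_sum_generators hρ hfix hS h)).mono hUp).tendsto_inv_smul_nhds_zero
    simpa [u, smul_sub] using this
  obtain ⟨φ, hφ⟩ := exists_monoidHom_tendsto_of_tendsto_mul_sub U u hbdd hmul
  refine ⟨φ, ?_⟩
  rintro rfl
  have hsum_one : ∀ᶠ z in U, ∑ s ∈ S, ‖u s z‖ = 1 := hUM.mono fun z hz => by
    have hM : 0 ≤ M z := by positivity
    simp only [u, norm_smul, norm_inv, ← Finset.mul_sum, Real.norm_of_nonneg hM]
    exact inv_mul_cancel₀ hz
  have hsum_zero : Tendsto (fun z => ∑ s ∈ S, ‖u s z‖) U (𝓝 0) := by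
    simpa using tendsto_finsetSum S fun s _ => (hφ s).norm
  exact zero_ne_one (tendsto_nhds_unique (tendsto_const_nhds.congr' (hsum_one.mono
    fun _ h => h.symm)) hsum_zero).symm

theorem eventually_apply_eq_self_of_hasStrictFDerivAt [FiniteDimensional ℝ V]
    (hG : Monoid.FG G) (hhom : ∀ φ : G →* Multiplicative ℝ, φ = 1)
    (hρ : ∀ g, HasStrictFDerivAt (ρ g) (.id ℝ V) p) (hfix : ∀ g, ρ g p = p) :
    ∀ᶠ z in 𝓝 p, ∀ g, ρ g z = z := by
  obtain ⟨S, hS⟩ := hG.fg_top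
  have hstill : ∀ᶠ z in 𝓝 p, ∑ s ∈ S, ‖ρ s z - z‖ = 0 := by
    by_contra hmove
    obtain ⟨φ, hφ⟩ :=
      exists_monoidHom_ne_one_of_frequently hρ hfix hS (not_eventually.mp hmove)
    obtain ⟨ψ, hψ⟩ := exists_monoidHom_real_ne_one φ hφ
    exact hψ (hhom ψ)
  filter_upwards [hstill] with z hz
  refine apply_eq_self_of_closure_eq_top hS ρ fun s hs => ?_
  have := (Finset.sum_eq_zero_iff_of_nonneg fun _ _ => norm_nonneg _).mp hz s hs
  rwa [norm_eq_zero, sub_eq_zero] at this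

end Displacement

theorem apply_eq_self_of_contDiff {G V : Type*} [Monoid G] [NormedAddCommGroup V]
    [NormedSpace ℝ V] [FiniteDimensional ℝ V] (hG : Monoid.FG G)
    (hhom : ∀ φ : G →* Multiplicative ℝ, φ = 1) (ρ : G →* Equiv.Perm V)
    (hC1 : ∀ g, ContDiff ℝ 1 (ρ g)) {x : V} (hfix : ∀ g, ρ g x = x)
    (hder : ∀ g, fderiv ℝ (ρ g) x = .id ℝ V) (g : G) (y : V) : ρ g y = y := by
  set U := {v | ∀ᶠ z in 𝓝 v, ∀ g, ρ g z = z}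
  have hlocal : ∀ v, (∀ g, ρ g v = v) → (∀ g, fderiv ℝ (ρ g) v = .id ℝ V) →
      v ∈ U :=
    fun v hv hdv => eventually_apply_eq_self_of_hasStrictFDerivAt hG hhom
      (fun g => hdv g ▸ (hC1 g).contDiffAt.hasStrictFDerivAt one_ne_zero) hv
  have hfix_closure : ∀ g, closure U ⊆ {v | ρ g v = v} := fun g =>
    closure_minimal (fun v hv => hv.self_of_nhds g)
      (isClosed_eq (hC1 g).continuous continuous_id)
  have hder_closure : ∀ g, closure U ⊆ {v | fderiv ℝ (ρ g) v = .id ℝ V} := fun g =>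
    closure_minimal (fun v hv => by
        have hid : ⇑(ρ g) =ᶠ[𝓝 v] id := hv.mono fun z hz => hz g
        simpa using hid.fderiv_eq (𝕜 := ℝ))
      (isClosed_eq ((hC1 g).continuous_fderiv one_ne_zero) continuous_const)
  have hclosed : IsClosed U := isClosed_of_closure_subset fun v hv =>
    hlocal v (fun g => hfix_closure g hv) (fun g => hder_closure g hv)
  have hU : U = Set.univ :=
    IsClopen.eq_univ ⟨hclosed, isOpen_setOfPred_eventually_nhds⟩ ⟨x, hlocal x hfix hder⟩
  exact (hU ▸ Set.mem_univ y : y ∈ U).self_of_nhds g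

/-- **Thurston's Stability Lemma.** Let `G` be a finitely generated group acting
on `ℝⁿ` by `C¹` bijections with a global fixed point `x` at which every
derivative is the identity. Then either `G` admits a nontrivial homomorphism to
`(ℝ,+)`, or `G` acts trivially. -/
theorem thurston_stability {G : Type*} [Group G] (hfg : Group.FG G) (n : ℕ)
    (ρ : G →* Equiv.Perm (EuclideanSpace ℝ (Fin n)))
    (hC1 : ∀ g : G, ContDiff ℝ 1 (ρ g))
    (x : EuclideanSpace ℝ (Fin n))
    (hfix : ∀ g : G, ρ g x = x)
    (hder : ∀ g : G, fderiv ℝ (ρ g) x = ContinuousLinearMap.id ℝ (EuclideanSpace ℝ (Fin n))) :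
    (∃ φ : G →* Multiplicative ℝ, φ ≠ 1) ∨
      (∀ (g : G) (y : EuclideanSpace ℝ (Fin n)), ρ g y = y) := by
  refine or_iff_not_imp_left.mpr fun hhom => ?_
  push Not at hhom
  exact apply_eq_self_of_contDiff (Group.fg_iff_monoid_fg.mp hfg) hhom ρ hC1 hfix hder
end

section
/- Let G be a finitely generated group with an orientation-preserving C¹ action ρ on the circle, suppose every group homomorphism from G to the additive group (ℝ,+) is trivial, and suppose the action has a global fixed point, i.e. there is a point p ∈ S¹ with ρ(g)(p) = p for all g ∈ G. Then G acts trivially: ρ(g) is the identity homeomorphism of the circle for every g ∈ G. -/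
open MeasureTheory

/-! Lift the action to an action of `G` on `ℝ` by `C¹` diffeomorphisms fixing a lift of `p`.
Its fixed-point set is closed and nonempty; if it is not all of `ℝ`, it has a boundary point `q`.
Since `g ↦ log (g • ·)'(q)` is a homomorphism to `ℝ`, hence zero, every `g` has derivative `1`
at `q`, so by strict differentiability the displacement `z ↦ g • z - z` is additive in `g` up to
lower-order terms as `z → q`. Normalising the displacements by the total displacement of a finite
generating set at points `z → q` not fixed by `G`, and taking limits along an ultrafilter, gives a
homomorphism `G → ℝ` that is nonzero on some generator (Thurston's stability argument). -/

open Filter Topology Asymptotics Set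

theorem HasStrictDerivAt.isLittleO_comp_of_tendsto {α : Type*} {l : Filter α} {f : ℝ → ℝ}
    {f' q : ℝ} (hf : HasStrictDerivAt f f' q) {u v : α → ℝ} (hu : Tendsto u l (𝓝 q))
    (hv : Tendsto v l (𝓝 q)) :
    (fun i => f (u i) - f (v i) - (u i - v i) * f') =o[l] fun i => u i - v i :=
  (hasDerivAtFilter_iff_isLittleO.1 hf).comp_tendsto (hu.prodMk_nhds hv)

theorem Asymptotics.IsBigO.exists_tendsto_div {α : Type*} {U : Ultrafilter α} {f g : α → ℝ}
    (h : f =O[(U : Filter α)] g) : ∃ c, Tendsto (fun i => f i / g i) U (𝓝 c) := by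
  obtain ⟨C, hC, hfg⟩ := h.exists_pos
  have hbdd : ∀ᶠ i in (U : Filter α), f i / g i ∈ Metric.closedBall 0 C := by
    filter_upwards [hfg.bound] with i hi
    rw [mem_closedBall_zero_iff, norm_div]
    exact div_le_of_le_mul₀ (norm_nonneg _) hC.le hi
  obtain ⟨c, -, hc⟩ := (isCompact_closedBall (0 : ℝ) C).ultrafilter_le_nhds (U.map _)
    (le_principal_iff.2 hbdd)
  exact ⟨c, hc⟩

section Stability

variable {G : Type*} [Group G] [MulAction G ℝ] {q : ℝ} {l : Filter ℝ}

theorem smul_eq_self_of_closure_eq_top {S : Set G} (hS : Subgroup.closure S = ⊤) {z : ℝ}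
    (hz : ∀ s ∈ S, s • z = z) (g : G) : g • z = z :=
  (Subgroup.closure_le (MulAction.stabilizer G z)).2 hz (hS ▸ Subgroup.mem_top g)

def displacement (g : G) (z : ℝ) : ℝ := g • z - z

theorem isLittleO_displacement_mul (hder : ∀ g : G, HasStrictDerivAt (g • · : ℝ → ℝ) 1 q)
    (hq : ∀ g : G, g • q = q) (hl : l ≤ 𝓝 q) (g h : G) :
    (fun z => displacement (g * h) z - displacement g z - displacement h z) =o[l]
      displacement h := by
  have hh : Tendsto (h • · : ℝ → ℝ) l (𝓝 q) := by
    simpa [hq h] using (hder h).hasDerivAt.continuousAt.tendsto.mono_left hl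
  refine (HasStrictDerivAt.isLittleO_comp_of_tendsto (hder g) hh hl).congr_left fun z => ?_
  simp only [displacement, mul_smul, mul_one]
  ring

theorem isBigO_displacement {S : Set G} (hS : Subgroup.closure S = ⊤)
    (hder : ∀ g : G, HasStrictDerivAt (g • · : ℝ → ℝ) 1 q) (hq : ∀ g : G, g • q = q)
    (hl : l ≤ 𝓝 q) {M : ℝ → ℝ} (hM : ∀ s ∈ S, displacement s =O[l] M) (g : G) :
    displacement g =O[l] M := by
  have hg : g ∈ Subgroup.closure S := hS ▸ Subgroup.mem_top g
  induction hg using Subgroup.closure_induction with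
  | mem s hs => exact hM s hs
  | one => exact (isBigO_zero M l).congr_left fun z => by simp [displacement]
  | mul g h _ _ hg hh =>
    refine ((((isLittleO_displacement_mul hder hq hl g h).trans_isBigO hh).isBigO.add hg).add
      hh).congr_left fun z => ?_
    ring
  | inv g _ hg =>
    -- `displacement g⁻¹` is `-displacement g` up to a term that is small relative to it
    refine (isLittleO_displacement_mul hder hq hl g g⁻¹).right_isBigO_add.trans
      (hg.neg_left.congr_left fun z => ?_)
    simp [displacement]

theorem exists_monoidHom_tendsto_displacement_div {U : Ultrafilter ℝ}
    (hU : (U : Filter ℝ) ≤ 𝓝 q)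
    (hder : ∀ g : G, HasStrictDerivAt (g • · : ℝ → ℝ) 1 q) (hq : ∀ g : G, g • q = q)
    {M : ℝ → ℝ} (hM : ∀ g : G, displacement g =O[(U : Filter ℝ)] M) :
    ∃ φ : G →* Multiplicative ℝ,
      ∀ g, Tendsto (fun z => displacement g z / M z) U (𝓝 (φ g).toAdd) := by
  choose c hc using fun g => (hM g).exists_tendsto_div
  have hadd : ∀ g h, c (g * h) = c g + c h := by
    intro g h
    have hsmall := ((isLittleO_displacement_mul hder hq hU g h).trans_isBigO
      (hM h)).tendsto_div_nhds_zero
    refine tendsto_nhds_unique (hc (g * h)) ?_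
    simpa using (((hc g).add (hc h)).add hsmall).congr fun z => by ring
  exact ⟨MonoidHom.mk' (fun g => .ofAdd (c g)) fun g h => by rw [hadd]; rfl, hc⟩

theorem exists_monoidHom_ne_one_of_eventually_notMem_fixedPoints (hfg : Group.FG G)
    (hder : ∀ g : G, HasStrictDerivAt (g • · : ℝ → ℝ) 1 q) (hq : ∀ g : G, g • q = q)
    [l.NeBot] (hl : l ≤ 𝓝 q) (hmoved : ∀ᶠ z in l, z ∉ MulAction.fixedPoints G ℝ) :
    ∃ φ : G →* Multiplicative ℝ, φ ≠ 1 := by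
  obtain ⟨S, hS⟩ := hfg.out
  set M : ℝ → ℝ := fun z => ∑ s ∈ S, |displacement s z|
  have hM_nonneg : ∀ z, 0 ≤ M z := fun z => Finset.sum_nonneg fun s _ => abs_nonneg _
  have hU : (Ultrafilter.of l : Filter ℝ) ≤ 𝓝 q := (Ultrafilter.of_le l).trans hl
  have hMS : ∀ s ∈ (S : Set G), displacement s =O[(Ultrafilter.of l : Filter ℝ)] M :=
    fun s hs => isBigO_of_le _ fun z => by
      rw [Real.norm_eq_abs, Real.norm_of_nonneg (hM_nonneg z)]
      exact Finset.single_le_sum (f := fun s => |displacement s z|)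
        (fun _ _ => abs_nonneg _) hs
  obtain ⟨φ, hφ⟩ := exists_monoidHom_tendsto_displacement_div hU hder hq
    (isBigO_displacement hS hder hq hU hMS)
  refine ⟨φ, fun hφ1 => ?_⟩
  have hlim : Tendsto (fun z => ∑ s ∈ S, |displacement s z / M z|) (Ultrafilter.of l)
      (𝓝 0) := by
    simpa [hφ1] using tendsto_finsetSum S fun s _ => (hφ s).abs
  have hone : ∀ᶠ z in (Ultrafilter.of l : Filter ℝ),
      ∑ s ∈ S, |displacement s z / M z| = 1 := by
    filter_upwards [Ultrafilter.of_le l hmoved] with z hz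
    have hMz : M z ≠ 0 := fun hMz => hz <| smul_eq_self_of_closure_eq_top hS fun s hs => by
      have := (Finset.sum_eq_zero_iff_of_nonneg fun s _ => abs_nonneg _).1 hMz s hs
      rwa [abs_eq_zero, displacement, sub_eq_zero] at this
    simp_rw [abs_div, ← Finset.sum_div, abs_of_nonneg (hM_nonneg z)]
    exact div_self hMz
  exact one_ne_zero <|
    tendsto_nhds_unique (tendsto_const_nhds.congr' (hone.mono fun _ h => h.symm)) hlim

theorem deriv_smul_eq_one_at_fixedPoint (hcoh : ∀ φ : G →* Multiplicative ℝ, φ = 1)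
    (hdiff : ∀ g : G, DifferentiableAt ℝ (g • · : ℝ → ℝ) q)
    (hpos : ∀ g : G, 0 < deriv (g • · : ℝ → ℝ) q) (hq : ∀ g : G, g • q = q) (g : G) :
    deriv (g • · : ℝ → ℝ) q = 1 := by
  have hchain : ∀ g h : G,
      deriv ((g * h) • · : ℝ → ℝ) q = deriv (g • · : ℝ → ℝ) q * deriv (h • · : ℝ → ℝ) q := by
    intro g h
    have : ((g * h) • · : ℝ → ℝ) = (g • ·) ∘ (h • ·) := funext (mul_smul g h)
    rw [this, deriv_comp q ((hq h).symm ▸ hdiff g) (hdiff h), hq h]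
  let φ : G →* Multiplicative ℝ := MonoidHom.mk'
    (fun g => .ofAdd (Real.log (deriv (g • · : ℝ → ℝ) q))) fun g h => by
      rw [hchain, Real.log_mul (hpos g).ne' (hpos h).ne']; rfl
  exact Real.eq_one_of_pos_of_log_eq_zero (hpos g)
    (congrArg Multiplicative.toAdd (DFunLike.congr_fun (hcoh φ) g))

theorem smul_eq_self_of_mem_fixedPoints (hfg : Group.FG G)
    (hcoh : ∀ φ : G →* Multiplicative ℝ, φ = 1)
    (hC1 : ∀ g : G, ContDiff ℝ 1 (g • · : ℝ → ℝ))
    (hpos : ∀ (g : G) (x : ℝ), 0 < deriv (g • · : ℝ → ℝ) x)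
    {x₀ : ℝ} (hx₀ : x₀ ∈ MulAction.fixedPoints G ℝ) (g : G) (z : ℝ) : g • z = z := by
  let F := MulAction.fixedPoints G ℝ
  have hF : IsClosed F := by
    simp only [F, MulAction.fixedPoints, Set.ofPred_forall]
    exact isClosed_iInter fun g => isClosed_eq (hC1 g).continuous continuous_id
  suffices F = univ from (this ▸ mem_univ z : z ∈ F) g
  by_contra hne
  have hopen : ¬IsOpen F := fun hopen =>
    hne ((isClopen_iff.1 ⟨hF, hopen⟩).resolve_left (Set.nonempty_of_mem hx₀).ne_empty)
  obtain ⟨q, hqF, hq_not_nhds⟩ : ∃ q ∈ F, F ∉ 𝓝 q := by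
    simpa [isOpen_iff_mem_nhds] using hopen
  have : (𝓝[Fᶜ] q).NeBot := mem_closure_iff_nhdsWithin_neBot.1 <| by
    rwa [closure_compl, mem_compl_iff, mem_interior_iff_mem_nhds]
  have hder' : ∀ g : G, deriv (g • · : ℝ → ℝ) q = 1 :=
    deriv_smul_eq_one_at_fixedPoint hcoh (fun g => (hC1 g).differentiable one_ne_zero q)
      (hpos · q) hqF
  have hder : ∀ g : G, HasStrictDerivAt (g • · : ℝ → ℝ) 1 q := fun g =>
    hder' g ▸ (hC1 g).hasStrictDerivAt one_ne_zero
  obtain ⟨φ, hφ⟩ := exists_monoidHom_ne_one_of_eventually_notMem_fixedPoints (l := 𝓝[Fᶜ] q)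
    hfg hder hqF nhdsWithin_le_nhds eventually_mem_nhdsWithin
  exact hφ (hcoh φ)

end Stability

theorem IsOPC1Lift.sub_intCast {f : UnitAddCircle ≃ₜ UnitAddCircle} {F : ℝ → ℝ}
    (hF : IsOPC1Lift f F) (m : ℤ) : IsOPC1Lift f (fun x => F x - m) := by
  obtain ⟨hC1, hpos, hperiodic, hlift⟩ := hF
  refine ⟨hC1.sub contDiff_const, fun x => ?_, fun x => ?_, fun x => ?_⟩
  · rw [deriv_sub_const]
    exact hpos x
  · simp only [hperiodic]
    ring
  · rw [hlift, AddCircle.coe_sub, eq_comm, sub_eq_self, AddCircle.coe_eq_zero_iff]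
    exact ⟨m, by simp⟩

theorem IsOPC1Lift.exists_apply_eq {f : UnitAddCircle ≃ₜ UnitAddCircle} {F : ℝ → ℝ}
    (hF : IsOPC1Lift f F) {x₀ : ℝ} (hx₀ : f x₀ = x₀) : ∃ F', IsOPC1Lift f F' ∧ F' x₀ = x₀ := by
  obtain ⟨m, hm⟩ : ∃ m : ℤ, m • (1 : ℝ) = F x₀ - x₀ := by
    rw [← AddCircle.coe_eq_zero_iff, AddCircle.coe_sub, ← hF.2.2.2, hx₀, sub_self]
  exact ⟨_, hF.sub_intCast m, by simp at hm; linarith⟩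

theorem AddCircle.eq_of_forall_coe_eq {p : ℝ} {F₁ F₂ : ℝ → ℝ} (h₁ : Continuous F₁)
    (h₂ : Continuous F₂) (h : ∀ x, (F₁ x : AddCircle p) = F₂ x) {x₀ : ℝ} (h₀ : F₁ x₀ = F₂ x₀) :
    F₁ = F₂ :=
  (AddCircle.isCoveringMap_coe p).eq_of_comp_eq h₁ h₂ (funext h) x₀ h₀

theorem exists_monoidHom_isOPC1Lift {G : Type*} [Group G]
    (ρ : G →* (UnitAddCircle ≃ₜ UnitAddCircle)) (hρ : ∀ g : G, ∃ F : ℝ → ℝ, IsOPC1Lift (ρ g) F)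
    {x₀ : ℝ} (hx₀ : ∀ g : G, ρ g x₀ = x₀) :
    ∃ L : G →* Function.End ℝ, ∀ g : G, IsOPC1Lift (ρ g) (L g) ∧ L g x₀ = x₀ := by
  choose F hF hFx₀ using fun g => (hρ g).elim fun _ hF => hF.exists_apply_eq (hx₀ g)
  refine ⟨{ toFun := F, map_one' := ?_, map_mul' := fun g h => ?_ }, fun g => ⟨hF g, hFx₀ g⟩⟩
  · refine AddCircle.eq_of_forall_coe_eq (p := 1) (hF 1).1.continuous continuous_id (fun x => ?_)
      (hFx₀ 1)
    rw [← (hF 1).2.2.2, map_one]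
    rfl
  · refine AddCircle.eq_of_forall_coe_eq (p := 1) (F₂ := F g ∘ F h) (hF _).1.continuous
      ((hF g).1.continuous.comp (hF h).1.continuous) (fun x => ?_) (x₀ := x₀) (by simp [hFx₀])
    rw [← (hF _).2.2.2, map_mul, Function.comp_apply, ← (hF g).2.2.2, ← (hF h).2.2.2]
    rfl

/-- **Lemma (corollary of Thurston's Stability Lemma).** A finitely generated
group with `H¹(G,ℝ) = 0` (every homomorphism to `(ℝ,+)` is trivial) acting on
the circle by an orientation-preserving `C¹` action with a global fixed point
acts trivially. -/
theorem trivial_of_global_fixed_point {G : Type*} [Group G] (hfg : Group.FG G)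
    (ρ : G →* (UnitAddCircle ≃ₜ UnitAddCircle))
    (hρ : ∀ g : G, ∃ F : ℝ → ℝ, IsOPC1Lift (ρ g) F)
    (hcoh : ∀ φ : G →* Multiplicative ℝ, φ = 1)
    (p : UnitAddCircle) (hp : ∀ g : G, ρ g p = p) :
    ∀ g : G, ρ g = Homeomorph.refl UnitAddCircle := by
  obtain ⟨x₀, rfl⟩ := QuotientAddGroup.mk_surjective p
  obtain ⟨L, hL⟩ := exists_monoidHom_isOPC1Lift ρ hρ hp
  let : MulAction G ℝ := MulAction.compHom ℝ L
  have hL_trivial : ∀ (g : G) (x : ℝ), L g x = x :=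
    smul_eq_self_of_mem_fixedPoints hfg hcoh (fun g => (hL g).1.1) (fun g => (hL g).1.2.1)
      (fun g => (hL g).2)
  intro g
  ext z
  obtain ⟨x, rfl⟩ := QuotientAddGroup.mk_surjective z
  rw [(hL g).1.2.2.2 x, hL_trivial]
  rfl
end

section
/- Let f be a self-homeomorphism of the circle S¹ = ℝ/ℤ admitting a lift F : ℝ → ℝ that is continuous, strictly increasing, satisfies F(x+1) = F(x)+1 for all x ∈ ℝ, and f(x mod 1) = F(x) mod 1 for all x ∈ ℝ. Let μ be a Borel probability measure on S¹ invariant under f (the pushforward of μ under f equals μ), and let δ : S¹ → ℝ be the displacement function determined by δ(x mod 1) = F(x) − x for all x ∈ ℝ. If the mean rotation number ∫ δ dμ is an integer, then f has a fixed point: there exists p ∈ S¹ with f(p) = p. -/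
open MeasureTheory

/-!
A continuous function on a compact connected space takes its mean with respect to any probability
measure as a value. So if `∫ δ dμ = m ∈ ℤ`, some `x` has `F x = x + m`, which on the circle
says `f x = x`.
-/

theorem exists_eq_integral_of_continuous {X : Type*} [TopologicalSpace X] [ConnectedSpace X]
    [CompactSpace X] [MeasurableSpace X] [OpensMeasurableSpace X]
    (μ : Measure X) [IsProbabilityMeasure μ] {g : X → ℝ} (hg : Continuous g) :
    ∃ p, g p = ∫ x, g x ∂μ := by
  have hint : Integrable g μ := hg.integrable_of_hasCompactSupport (.of_compactSpace g)
  obtain ⟨p, -, hp⟩ := exists_eq_setAverage isConnected_univ hg.continuousOn hint.integrableOn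
    (measure_ne_top μ _) (by simp)
  exact ⟨p, by rwa [Measure.restrict_univ, average_eq_integral] at hp⟩

theorem AddCircle.continuous_of_continuous_comp_coe {T : ℝ} {Y : Type*} [TopologicalSpace Y]
    {g : AddCircle T → Y} (hg : Continuous (g ∘ ((↑) : ℝ → AddCircle T))) :
    Continuous g :=
  (QuotientAddGroup.isQuotientMap_mk _).continuous_iff.mpr hg

theorem apply_coe_eq_coe_of_lift_sub_eq_int {f : UnitAddCircle → UnitAddCircle} {F : ℝ → ℝ}
    (hlift : ∀ x : ℝ, f (x : UnitAddCircle) = ((F x : ℝ) : UnitAddCircle))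
    {x : ℝ} {m : ℤ} (h : F x - x = m) : f x = x := by
  rw [hlift, show F x = x + m by linarith]
  simp

theorem fixed_point_of_integer_mean_rotation_number_general
    (f : UnitAddCircle ≃ₜ UnitAddCircle) (F : ℝ → ℝ)
    (hF : Continuous F)
    (hlift : ∀ x : ℝ, f (x : UnitAddCircle) = ((F x : ℝ) : UnitAddCircle))
    (μ : Measure UnitAddCircle) [IsProbabilityMeasure μ]
    (δ : UnitAddCircle → ℝ)
    (hδ : ∀ x : ℝ, δ (x : UnitAddCircle) = F x - x)
    (hrot : ∃ m : ℤ, ∫ p, δ p ∂μ = (m : ℝ)) :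
    ∃ p : UnitAddCircle, f p = p := by
  obtain ⟨m, hm⟩ := hrot
  have hδc : Continuous δ := AddCircle.continuous_of_continuous_comp_coe <| by
    simp only [Function.comp_def, hδ]; fun_prop
  obtain ⟨p, hp⟩ := exists_eq_integral_of_continuous μ hδc
  obtain ⟨x, rfl⟩ := QuotientAddGroup.mk_surjective p
  exact ⟨x, apply_coe_eq_coe_of_lift_sub_eq_int hlift (by rw [← hδ, hp, hm])⟩

/-- **Proposition.** Let `f` be an orientation-preserving circle homeomorphism
with lift `F`, preserving a Borel probability measure `μ`. If the mean rotation
number `∫ δ dμ` of the displacement function `δ (x mod 1) = F x − x` is an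
integer, then `f` has a fixed point. -/
theorem fixed_point_of_integer_mean_rotation_number
    (f : UnitAddCircle ≃ₜ UnitAddCircle) (F : ℝ → ℝ)
    (hF : Continuous F) (hmono : StrictMono F)
    (hper : ∀ x : ℝ, F (x + 1) = F x + 1)
    (hlift : ∀ x : ℝ, f (x : UnitAddCircle) = ((F x : ℝ) : UnitAddCircle))
    (μ : Measure UnitAddCircle) [IsProbabilityMeasure μ]
    (hinv : Measure.map f μ = μ)
    (δ : UnitAddCircle → ℝ)
    (hδ : ∀ x : ℝ, δ (x : UnitAddCircle) = F x - x)
    (hrot : ∃ m : ℤ, ∫ p, δ p ∂μ = (m : ℝ)) :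
    ∃ p : UnitAddCircle, f p = p :=
  fixed_point_of_integer_mean_rotation_number_general f F hF hlift μ δ hδ hrot
end

section
/- Let f and g be self-homeomorphisms of the circle S¹ = ℝ/ℤ admitting lifts F, G : ℝ → ℝ respectively, each continuous, strictly increasing, satisfying F(x+1) = F(x)+1 and G(x+1) = G(x)+1 for all x ∈ ℝ, with f(x mod 1) = F(x) mod 1 and g(x mod 1) = G(x) mod 1. Let μ be a Borel probability measure on S¹ invariant under both f and g. Let δ_f, δ_g, δ_{f∘g} : S¹ → ℝ be the displacement functions determined by δ_f(x mod 1) = F(x) − x, δ_g(x mod 1) = G(x) − x, and δ_{f∘g}(x mod 1) = F(G(x)) − x for all x ∈ ℝ. Then ∫ δ_{f∘g} dμ = ∫ δ_f dμ + ∫ δ_g dμ; in particular the mean rotation number g ↦ ∫ δ_g dμ (mod 1) is a group homomorphism into ℝ/ℤ on any group of homeomorphisms preserving μ. -/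
open MeasureTheory

/-!
Lifting `g` by `G`, the displacement of `f ∘ g` at `x` telescopes as
`F (G x) - x = (F (G x) - G x) + (G x - x)`, i.e. `δ_{f∘g} = δ_f ∘ g + δ_g` on the circle.
The displacements are continuous on the compact circle, hence `μ`-integrable, and
`∫ δ_f ∘ g dμ = ∫ δ_f dμ` because `g` preserves `μ`.
-/

namespace AddCircle

variable {p : ℝ}

theorem continuous_of_forall_coe_eq {X : Type*} [TopologicalSpace X] {δ : AddCircle p → X}
    {H : ℝ → X} (hH : Continuous H) (hδ : ∀ x : ℝ, δ x = H x) : Continuous δ :=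
  (QuotientAddGroup.isQuotientMap_mk _).continuous_iff.mpr (by simpa [Function.comp_def, hδ])

theorem displacement_comp_eq_add {g : AddCircle p → AddCircle p} {F G : ℝ → ℝ}
    {δf δg δfg : AddCircle p → ℝ} (hGlift : ∀ x : ℝ, g x = G x)
    (hδf : ∀ x : ℝ, δf x = F x - x) (hδg : ∀ x : ℝ, δg x = G x - x)
    (hδfg : ∀ x : ℝ, δfg x = F (G x) - x) (y : AddCircle p) :
    δfg y = δf (g y) + δg y := by
  induction y using QuotientAddGroup.induction_on with
  | H x => rw [hδfg, hGlift, hδf, hδg]; ring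

end AddCircle

theorem mean_rotation_number_additive_general
    (g : UnitAddCircle ≃ₜ UnitAddCircle) (F G : ℝ → ℝ)
    (hF : Continuous F)
    (hG : Continuous G)
    (hGlift : ∀ x : ℝ, g (x : UnitAddCircle) = ((G x : ℝ) : UnitAddCircle))
    (μ : Measure UnitAddCircle) [IsProbabilityMeasure μ]
    (hginv : Measure.map g μ = μ)
    (δf δg δfg : UnitAddCircle → ℝ)
    (hδf : ∀ x : ℝ, δf (x : UnitAddCircle) = F x - x)
    (hδg : ∀ x : ℝ, δg (x : UnitAddCircle) = G x - x)
    (hδfg : ∀ x : ℝ, δfg (x : UnitAddCircle) = F (G x) - x) :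
    ∫ p, δfg p ∂μ = (∫ p, δf p ∂μ) + ∫ p, δg p ∂μ := by
  have hδf_cont := AddCircle.continuous_of_forall_coe_eq (hF.sub continuous_id) hδf
  have hδg_cont := AddCircle.continuous_of_forall_coe_eq (hG.sub continuous_id) hδg
  have hg : MeasurePreserving g.toMeasurableEquiv μ μ := ⟨g.continuous.measurable, hginv⟩
  calc ∫ p, δfg p ∂μ = ∫ p, (δf (g p) + δg p) ∂μ :=
        integral_congr_ae (.of_forall (AddCircle.displacement_comp_eq_add hGlift hδf hδg hδfg))
    _ = (∫ p, δf (g p) ∂μ) + ∫ p, δg p ∂μ :=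
        integral_add
          ((hδf_cont.comp g.continuous).integrable_of_hasCompactSupport
            (.of_compactSpace _))
          (hδg_cont.integrable_of_hasCompactSupport (.of_compactSpace _))
    _ = (∫ p, δf p ∂μ) + ∫ p, δg p ∂μ := congrArg (· + _) (hg.integral_comp' δf)

/-- **Proposition.** The mean rotation number with respect to an invariant
probability measure is additive: if `f`, `g` are orientation-preserving circle
homeomorphisms with lifts `F`, `G` preserving a Borel probability measure `μ`,
then the integral of the displacement function of `f ∘ g` is the sum of the
integrals of the displacement functions of `f` and of `g`. Hence the mean
rotation number map is a homomorphism to `ℝ/ℤ`. -/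
theorem mean_rotation_number_additive
    (f g : UnitAddCircle ≃ₜ UnitAddCircle) (F G : ℝ → ℝ)
    (hF : Continuous F) (hFmono : StrictMono F)
    (hFper : ∀ x : ℝ, F (x + 1) = F x + 1)
    (hFlift : ∀ x : ℝ, f (x : UnitAddCircle) = ((F x : ℝ) : UnitAddCircle))
    (hG : Continuous G) (hGmono : StrictMono G)
    (hGper : ∀ x : ℝ, G (x + 1) = G x + 1)
    (hGlift : ∀ x : ℝ, g (x : UnitAddCircle) = ((G x : ℝ) : UnitAddCircle))
    (μ : Measure UnitAddCircle) [IsProbabilityMeasure μ]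
    (hfinv : Measure.map f μ = μ) (hginv : Measure.map g μ = μ)
    (δf δg δfg : UnitAddCircle → ℝ)
    (hδf : ∀ x : ℝ, δf (x : UnitAddCircle) = F x - x)
    (hδg : ∀ x : ℝ, δg (x : UnitAddCircle) = G x - x)
    (hδfg : ∀ x : ℝ, δfg (x : UnitAddCircle) = F (G x) - x) :
    ∫ p, δfg p ∂μ = (∫ p, δf p ∂μ) + ∫ p, δg p ∂μ :=
  mean_rotation_number_additive_general g F G hF hG hGlift μ hginv δf δg δfg hδf hδg hδfg
end
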